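/- arXiv:1907.08991 — 7 statements merged into one kernel-verified Lean document; each statement's English description precedes it below -/
import Mathlib

section
/- For every positive integer d, the number of additive subgroups of ℤ × ℤ of index d is equal to σ₁(d). -/
/-- σ_k(d): the sum of the k-th powers of the positive divisors of d. -/
def sigma (k d : ℕ) : ℕ := ∑ e ∈ d.divisors, e ^ k

/-!
Every subgroup `H` of finite index in `ℤ × ℤ` has a unique basis in Hermite normal form,
`(a, c)` and `(0, b)` with `a, b > 0` and `0 ≤ c < b`: here `aℤ` is the projection of `H` to
the first factor, `bℤ` is its intersection with the second one, and the index of `H` is `a * b`.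
So the subgroups of index `d` correspond to the pairs `(b, c)` with `b ∣ d` and `c < b`,
of which there are `∑_{b ∣ d} b = σ₁(d)`.
-/

open AddSubgroup

theorem AddSubgroup.index_comap_inr_mul_index_map_fst {G K : Type*} [AddCommGroup G]
    [AddCommGroup K] (H : AddSubgroup (G × K)) :
    (H.comap (AddMonoidHom.inr G K)).index * (H.map (AddMonoidHom.fst G K)).index = H.index := by
  have hker : (AddMonoidHom.inr G K).range = (AddMonoidHom.fst G K).ker := by
    ext ⟨x, y⟩
    simp [AddSubgroup.mem_prod, eq_comm]
  rw [index_comap, ← relIndex_sup_left,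
    ← index_comap_of_surjective (f := AddMonoidHom.fst G K) _ Prod.fst_surjective, comap_map_eq,
    ← hker]
  exact relIndex_mul_index le_sup_left

theorem Int.zmultiples_index (B : AddSubgroup ℤ) : zmultiples (B.index : ℤ) = B := by
  obtain ⟨a, rfl⟩ := Int.subgroup_cyclic B
  rw [← zmultiples_eq_closure, Int.index_zmultiples, Int.zmultiples_natAbs]

def hermiteLattice (a b c : ℤ) : AddSubgroup (ℤ × ℤ) where
  carrier := {p | ∃ m n : ℤ, p = (m * a, m * c + n * b)}
  zero_mem' := ⟨0, 0, by simp [Prod.ext_iff]⟩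
  add_mem' := by
    rintro _ _ ⟨m, n, rfl⟩ ⟨m', n', rfl⟩
    exact ⟨m + m', n + n', by ext <;> simp <;> ring⟩
  neg_mem' := by
    rintro _ ⟨m, n, rfl⟩
    exact ⟨-m, -n, by ext <;> simp; ring⟩

section hermiteLattice

variable {a b c : ℤ}

theorem mem_hermiteLattice {p : ℤ × ℤ} :
    p ∈ hermiteLattice a b c ↔ ∃ m n : ℤ, p = (m * a, m * c + n * b) := Iff.rfl

theorem map_fst_hermiteLattice :
    (hermiteLattice a b c).map (AddMonoidHom.fst ℤ ℤ) = zmultiples a := by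
  ext x
  simp only [mem_map, mem_hermiteLattice, Int.mem_zmultiples_iff]
  constructor
  · rintro ⟨_, ⟨m, n, rfl⟩, rfl⟩
    exact ⟨m, by simp [mul_comm]⟩
  · rintro ⟨m, rfl⟩
    exact ⟨_, ⟨m, 0, rfl⟩, by simp [mul_comm]⟩

theorem comap_inr_hermiteLattice (ha : a ≠ 0) :
    (hermiteLattice a b c).comap (AddMonoidHom.inr ℤ ℤ) = zmultiples b := by
  ext y
  simp only [mem_comap, AddMonoidHom.inr_apply, mem_hermiteLattice, Prod.ext_iff,
    Int.mem_zmultiples_iff]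
  constructor
  · rintro ⟨m, n, hm, hy⟩
    obtain rfl : m = 0 := by simpa [ha] using hm.symm
    exact ⟨n, by simpa [mul_comm] using hy⟩
  · rintro ⟨n, rfl⟩
    exact ⟨0, n, by simp [mul_comm]⟩

theorem index_hermiteLattice (ha : a ≠ 0) :
    (hermiteLattice a b c).index = a.natAbs * b.natAbs := by
  rw [← index_comap_inr_mul_index_map_fst, map_fst_hermiteLattice, comap_inr_hermiteLattice ha,
    Int.index_zmultiples, Int.index_zmultiples, mul_comm]

theorem eq_hermiteLattice_of_mem {H : AddSubgroup (ℤ × ℤ)}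
    (hfst : H.map (AddMonoidHom.fst ℤ ℤ) = zmultiples a)
    (hinr : H.comap (AddMonoidHom.inr ℤ ℤ) = zmultiples b) (hac : (a, c) ∈ H) :
    H = hermiteLattice a b c := by
  have hinr' : ∀ y, (0, y) ∈ H ↔ ∃ n : ℤ, n * b = y := fun y => by
    simpa [Int.mem_zmultiples_iff, dvd_iff_exists_eq_mul_left, eq_comm] using
      SetLike.ext_iff.mp hinr y
  ext q
  constructor
  · intro hq
    obtain ⟨m, hm⟩ : ∃ m : ℤ, m * a = q.1 := by
      have : q.1 ∈ zmultiples a := hfst ▸ mem_map_of_mem _ hq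
      simpa [Int.mem_zmultiples_iff, dvd_iff_exists_eq_mul_left, eq_comm] using this
    have hsub : q - m • (a, c) = (0, q.2 - m * c) := by ext <;> simp [← hm]
    obtain ⟨n, hn⟩ := (hinr' _).mp (hsub ▸ H.sub_mem hq (H.zsmul_mem hac m))
    exact ⟨m, n, Prod.ext hm.symm (by simp [hn])⟩
  · rintro ⟨m, n, rfl⟩
    have hb : (0, b) ∈ H := (hinr' b).mpr ⟨1, one_mul b⟩
    have hsum : m • (a, c) + n • (0, b) = (m * a, m * c + n * b) := by ext <;> simp
    exact hsum ▸ H.add_mem (H.zsmul_mem hac m) (H.zsmul_mem hb n)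

end hermiteLattice

theorem exists_eq_hermiteLattice (H : AddSubgroup (ℤ × ℤ)) (hH : H.index ≠ 0) :
    ∃ a b c : ℕ, 0 < a ∧ c < b ∧ H = hermiteLattice a b c := by
  set a := (H.map (AddMonoidHom.fst ℤ ℤ)).index
  set b := (H.comap (AddMonoidHom.inr ℤ ℤ)).index
  have hab : b * a = H.index := index_comap_inr_mul_index_map_fst H
  have ha : 0 < a := Nat.pos_of_ne_zero fun h => hH (by rw [← hab, h, mul_zero])
  have hb : 0 < b := Nat.pos_of_ne_zero fun h => hH (by rw [← hab, h, zero_mul])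
  have hfst : H.map (AddMonoidHom.fst ℤ ℤ) = zmultiples (a : ℤ) := (Int.zmultiples_index _).symm
  have hinr : H.comap (AddMonoidHom.inr ℤ ℤ) = zmultiples (b : ℤ) := (Int.zmultiples_index _).symm
  obtain ⟨c₀, hc₀⟩ : ∃ c₀ : ℤ, ((a : ℤ), c₀) ∈ H := by
    obtain ⟨p, hp, hpa⟩ := hfst ▸ mem_zmultiples (a : ℤ)
    exact ⟨p.2, by rwa [← hpa]⟩
  have hred : ((a : ℤ), c₀ % b) ∈ H := by
    have hb' : ((0 : ℤ), (b : ℤ)) ∈ H :=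
      (hinr ▸ mem_zmultiples _ : (b : ℤ) ∈ H.comap (AddMonoidHom.inr ℤ ℤ))
    have : ((a : ℤ), c₀) - (c₀ / b) • ((0 : ℤ), (b : ℤ)) = ((a : ℤ), c₀ % b) := by
      ext <;> simp [Int.emod_def, mul_comm]
    exact this ▸ H.sub_mem hc₀ (H.zsmul_mem hb' _)
  have hnonneg : 0 ≤ c₀ % b := Int.emod_nonneg _ (by omega)
  have hlt : c₀ % b < b := Int.emod_lt_of_pos _ (by omega)
  refine ⟨a, b, (c₀ % b).toNat, ha, by omega, ?_⟩
  rw [Int.toNat_of_nonneg hnonneg]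
  exact eq_hermiteLattice_of_mem hfst hinr hred

theorem hermiteLattice_inj {a b c a' b' c' : ℕ} (ha : 0 < a) (ha' : 0 < a') (hc : c < b)
    (hc' : c' < b') (h : hermiteLattice a b c = hermiteLattice a' b' c') :
    a = a' ∧ b = b' ∧ c = c' := by
  obtain rfl : a = a' := by
    simpa [map_fst_hermiteLattice, Int.index_zmultiples] using
      congrArg (fun H => (H.map (AddMonoidHom.fst ℤ ℤ)).index) h
  obtain rfl : b = b' := by
    simpa [comap_inr_hermiteLattice, ha.ne', Int.index_zmultiples] using
      congrArg (fun H => (H.comap (AddMonoidHom.inr ℤ ℤ)).index) h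
  obtain ⟨m, n, hm⟩ : ((a : ℤ), (c' : ℤ)) ∈ hermiteLattice a b c := h ▸ ⟨1, 0, by simp⟩
  obtain rfl : m = 1 := by
    have : (a : ℤ) = m * a := congrArg Prod.fst hm
    simpa [ha.ne'] using this
  have hcc : (c' : ℤ) = c + n * b := by simpa using congrArg Prod.snd hm
  refine ⟨rfl, rfl, ?_⟩
  have := Int.add_mul_emod_self_right (c : ℤ) n b
  rw [← hcc, Int.emod_eq_of_lt (by omega) (by omega), Int.emod_eq_of_lt (by omega) (by omega)]
    at this
  exact_mod_cast this.symm

theorem bijOn_hermiteLattice {d : ℕ} (hd : 0 < d) :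
    Set.BijOn (fun s : (_ : ℕ) × ℕ => hermiteLattice ((d / s.1 : ℕ) : ℤ) s.1 s.2)
      (d.divisors.sigma Finset.range) {H | H.index = d} := by
  have mem_iff : ∀ {b c : ℕ},
      (⟨b, c⟩ : (_ : ℕ) × ℕ) ∈ (d.divisors.sigma Finset.range : Set _) ↔ b ∣ d ∧ c < b := by
    simp [hd.ne']
  have div_pos : ∀ {b : ℕ}, b ∣ d → 0 < d / b := fun hbd =>
    Nat.div_pos (Nat.le_of_dvd hd hbd) (Nat.pos_of_dvd_of_pos hbd hd)
  refine ⟨?_, ?_, ?_⟩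
  · rintro ⟨b, c⟩ hs
    obtain ⟨hbd, -⟩ := mem_iff.mp hs
    show index _ = d
    rw [index_hermiteLattice (by exact_mod_cast (div_pos hbd).ne'), Int.natAbs_natCast,
      Int.natAbs_natCast]
    exact Nat.div_mul_cancel hbd
  · rintro ⟨b, c⟩ hs ⟨b', c'⟩ hs' h
    obtain ⟨hbd, hcb⟩ := mem_iff.mp hs
    obtain ⟨hbd', hcb'⟩ := mem_iff.mp hs'
    obtain ⟨-, rfl, rfl⟩ := hermiteLattice_inj (div_pos hbd) (div_pos hbd') hcb hcb' h
    rfl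
  · intro H hH
    obtain ⟨a, b, c, ha, hcb, rfl⟩ := exists_eq_hermiteLattice H (by rw [hH]; exact hd.ne')
    have hab : a * b = d := by
      simpa [index_hermiteLattice (Int.natCast_ne_zero.mpr ha.ne')] using hH
    refine ⟨⟨b, c⟩, mem_iff.mpr ⟨Dvd.intro_left a hab, hcb⟩, ?_⟩
    simp only [← hab, Nat.mul_div_cancel _ (show 0 < b by omega)]

/-- For every positive integer `d`, the number of additive subgroups of `ℤ × ℤ`
of index `d` (i.e. whose quotient has cardinality `d`) equals `σ₁(d)`. -/
theorem count_index_d_subgroups (d : ℕ) (hd : 0 < d) :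
    Nat.card {H : AddSubgroup (ℤ × ℤ) // Nat.card ((ℤ × ℤ) ⧸ H) = d} = sigma 1 d :=
  calc Nat.card {H : AddSubgroup (ℤ × ℤ) // Nat.card ((ℤ × ℤ) ⧸ H) = d}
      = Nat.card (d.divisors.sigma Finset.range) :=
        Nat.card_congr (bijOn_hermiteLattice hd).equiv.symm
    _ = sigma 1 d := by
      rw [Nat.card_eq_finsetCard, Finset.card_sigma]
      simp [sigma]
end

section
/- For every positive integer d, the number of additive subgroups of (ℤ/dℤ) × (ℤ/dℤ) of cardinality d is equal to σ₁(d). -/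
open AddSubgroup

/-- The subgroup generated by `(d/c, b)` and `(0, c)` in `(ZMod d)²`. -/
def Hgen (d c b : ℕ) : AddSubgroup (ZMod d × ZMod d) :=
  closure {((↑(d / c), ↑b) : ZMod d × ZMod d), (0, ↑c)}

section lemmas
variable {d c b : ℕ}

lemma csmul_x (hc : c ∣ d) :
    (c : ℤ) • (((d / c : ℕ) : ZMod d), (b : ZMod d)) =
      (b : ℤ) • ((0 : ZMod d), (c : ZMod d)) := by
  have h : c * (d / c) = d := Nat.mul_div_cancel' hc
  ext
  · show (c : ℤ) • ((d / c : ℕ) : ZMod d) = (b : ℤ) • (0 : ZMod d)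
    rw [smul_zero, natCast_zsmul, nsmul_eq_mul, ← Nat.cast_mul, h, ZMod.natCast_self]
  · show (c : ℤ) • (b : ZMod d) = (b : ℤ) • (c : ZMod d)
    rw [natCast_zsmul, natCast_zsmul, nsmul_eq_mul, nsmul_eq_mul, ← Nat.cast_mul, ← Nat.cast_mul, mul_comm]

lemma asmul_y (hc : c ∣ d) :
    ((d / c : ℕ) : ℤ) • ((0 : ZMod d), (c : ZMod d)) = 0 := by
  have h : (d / c) * c = d := Nat.div_mul_cancel hc
  ext
  · simp
  · show ((d / c : ℕ) : ℤ) • (c : ZMod d) = 0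
    rw [natCast_zsmul, nsmul_eq_mul, ← Nat.cast_mul, h, ZMod.natCast_self]

end lemmas

section main
variable {d c b : ℕ}

lemma mem_Hgen_iff (hd : 0 < d) (hc : c ∣ d) (p : ZMod d × ZMod d) :
    p ∈ Hgen d c b ↔ ∃ m n : ℕ, m < c ∧ n < d / c ∧
      m • (((d / c : ℕ) : ZMod d), (b : ZMod d)) + n • ((0 : ZMod d), (c : ZMod d)) = p := by
  have hc0 : 0 < c := Nat.pos_of_dvd_of_pos hc hd
  have ha0 : 0 < d / c := Nat.div_pos (Nat.le_of_dvd hd hc) hc0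
  set a := d / c with ha
  set x : ZMod d × ZMod d := ((a : ZMod d), (b : ZMod d)) with hx
  set y : ZMod d × ZMod d := ((0 : ZMod d), (c : ZMod d)) with hy
  constructor
  · intro h
    rw [Hgen, mem_closure_pair] at h
    obtain ⟨m, n, rfl⟩ := h
    have e1 : m • x + n • y = (m % c) • x + ((m / c) * b + n) • y := by
      conv_lhs => rw [show m = m % (c : ℤ) + c * (m / (c : ℤ)) from (Int.emod_add_mul_ediv m c).symm]
      rw [add_smul, mul_comm (c : ℤ), mul_smul, csmul_x hc, ← mul_smul, add_smul]
      abel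
    have e2 : ((m / c) * b + n) • y = (((m / c) * b + n) % a) • y := by
      conv_lhs => rw [show (m / (c:ℤ)) * b + n
        = ((m / (c:ℤ)) * b + n) % (a : ℤ) + a * (((m / (c:ℤ)) * b + n) / (a:ℤ)) from
        (Int.emod_add_mul_ediv _ a).symm]
      rw [add_smul, mul_comm (a : ℤ), mul_smul, asmul_y hc, smul_zero, add_zero]
    have hm1 : 0 ≤ m % (c:ℤ) := Int.emod_nonneg m (by exact_mod_cast hc0.ne')
    have hm2 : m % (c:ℤ) < c := Int.emod_lt_of_pos m (by exact_mod_cast hc0)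
    have hn1 : 0 ≤ ((m / (c:ℤ)) * b + n) % (a:ℤ) :=
      Int.emod_nonneg _ (by exact_mod_cast ha0.ne')
    have hn2 : ((m / (c:ℤ)) * b + n) % (a:ℤ) < a :=
      Int.emod_lt_of_pos _ (by exact_mod_cast ha0)
    refine ⟨(m % (c:ℤ)).toNat, (((m / (c:ℤ)) * b + n) % (a:ℤ)).toNat, by omega, by omega, ?_⟩
    have t1 : ((m % (c:ℤ)).toNat : ℤ) = m % (c:ℤ) := Int.toNat_of_nonneg hm1
    have t2 : ((((m / (c:ℤ)) * b + n) % (a:ℤ)).toNat : ℤ) = ((m / (c:ℤ)) * b + n) % (a:ℤ) :=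
      Int.toNat_of_nonneg hn1
    rw [← natCast_zsmul x, ← natCast_zsmul y, t1, t2, ← e2, ← e1]
  · rintro ⟨m, n, -, -, rfl⟩
    exact (mem_closure_pair).mpr ⟨m, n, by rw [natCast_zsmul, natCast_zsmul]⟩

lemma comb_fst (m n : ℕ) :
    ((m • (((d / c : ℕ) : ZMod d), (b : ZMod d)) + n • ((0 : ZMod d), (c : ZMod d)) :
      ZMod d × ZMod d)).1 = ((m * (d / c) : ℕ) : ZMod d) := by
  simp [nsmul_eq_mul, Nat.cast_mul]

lemma comb_snd (m n : ℕ) :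
    ((m • (((d / c : ℕ) : ZMod d), (b : ZMod d)) + n • ((0 : ZMod d), (c : ZMod d)) :
      ZMod d × ZMod d)).2 = ((m * b + n * c : ℕ) : ZMod d) := by
  simp [nsmul_eq_mul, Nat.cast_mul, Nat.cast_add]

lemma natCast_inj_of_lt {u v : ℕ} (hu : u < d) (hv : v < d)
    (h : (u : ZMod d) = (v : ZMod d)) : u = v := by
  have := (ZMod.natCast_eq_natCast_iff u v d).mp h
  unfold Nat.ModEq at this
  rwa [Nat.mod_eq_of_lt hu, Nat.mod_eq_of_lt hv] at this

lemma Hgen_unique (hd : 0 < d) (hc : c ∣ d) {m₁ n₁ m₂ n₂ : ℕ}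
    (hm₁ : m₁ < c) (hn₁ : n₁ < d / c) (hm₂ : m₂ < c) (hn₂ : n₂ < d / c)
    (h : m₁ • (((d / c : ℕ) : ZMod d), (b : ZMod d)) + n₁ • ((0 : ZMod d), (c : ZMod d))
       = m₂ • (((d / c : ℕ) : ZMod d), (b : ZMod d)) + n₂ • ((0 : ZMod d), (c : ZMod d))) :
    m₁ = m₂ ∧ n₁ = n₂ := by
  have hca : c * (d / c) = d := Nat.mul_div_cancel' hc
  have hc0 : 0 < c := Nat.pos_of_dvd_of_pos hc hd
  have ha0 : 0 < d / c := Nat.div_pos (Nat.le_of_dvd hd hc) hc0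
  have h1 : ((m₁ * (d / c) : ℕ) : ZMod d) = ((m₂ * (d / c) : ℕ) : ZMod d) := by
    rw [← comb_fst (b := b) m₁ n₁, ← comb_fst (b := b) m₂ n₂, h]
  have hm : m₁ = m₂ := by
    have := natCast_inj_of_lt (d := d) (by nlinarith) (by nlinarith) h1
    exact Nat.eq_of_mul_eq_mul_right ha0 this
  subst hm
  have h2 : ((m₁ * b + n₁ * c : ℕ) : ZMod d) = ((m₁ * b + n₂ * c : ℕ) : ZMod d) := by
    rw [← comb_snd m₁ n₁, ← comb_snd m₁ n₂, h]
  have h3 : n₁ * c ≡ n₂ * c [MOD d] :=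
    Nat.ModEq.add_left_cancel' _ ((ZMod.natCast_eq_natCast_iff _ _ _).mp h2)
  have h4 : n₁ * c = n₂ * c := by
    have e1 : n₁ * c < d := by nlinarith
    have e2 : n₂ * c < d := by nlinarith
    unfold Nat.ModEq at h3
    rwa [Nat.mod_eq_of_lt e1, Nat.mod_eq_of_lt e2] at h3
  exact ⟨rfl, Nat.eq_of_mul_eq_mul_right hc0 h4⟩

end main

section cards
variable {d c b : ℕ}

lemma card_Hgen (hd : 0 < d) (hc : c ∣ d) : Nat.card (Hgen d c b) = d := by
  have hca : c * (d / c) = d := Nat.mul_div_cancel' hc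
  let g : Fin c × Fin (d / c) → ZMod d × ZMod d := fun q =>
    q.1.1 • (((d / c : ℕ) : ZMod d), (b : ZMod d)) + q.2.1 • ((0 : ZMod d), (c : ZMod d))
  have hg : Function.Injective g := by
    rintro ⟨⟨m₁, hm₁⟩, ⟨n₁, hn₁⟩⟩ ⟨⟨m₂, hm₂⟩, ⟨n₂, hn₂⟩⟩ h
    obtain ⟨h1, h2⟩ := Hgen_unique (b := b) hd hc hm₁ hn₁ hm₂ hn₂ h
    simp only [Prod.mk.injEq, Fin.mk.injEq]
    exact ⟨h1, h2⟩
  have key : ∀ p, p ∈ Hgen d c b ↔ p ∈ Set.range g := by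
    intro p
    rw [mem_Hgen_iff hd hc]
    constructor
    · rintro ⟨m, n, hm, hn, rfl⟩; exact ⟨⟨⟨m, hm⟩, ⟨n, hn⟩⟩, rfl⟩
    · rintro ⟨⟨⟨m, hm⟩, ⟨n, hn⟩⟩, rfl⟩; exact ⟨m, n, hm, hn, rfl⟩
  calc Nat.card (Hgen d c b) = Nat.card (Set.range g) :=
        Nat.card_congr (Equiv.subtypeEquivRight key)
    _ = Nat.card (Fin c × Fin (d / c)) := Nat.card_congr (Equiv.ofInjective g hg).symm
    _ = c * (d / c) := by simp
    _ = d := hca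

lemma card_ker_inf_Hgen (hd : 0 < d) (hc : c ∣ d) :
    Nat.card ((AddMonoidHom.fst (ZMod d) (ZMod d)).ker ⊓ Hgen d c b :
      AddSubgroup (ZMod d × ZMod d)) = d / c := by
  have hca : c * (d / c) = d := Nat.mul_div_cancel' hc
  have hc0 : 0 < c := Nat.pos_of_dvd_of_pos hc hd
  have ha0 : 0 < d / c := Nat.div_pos (Nat.le_of_dvd hd hc) hc0
  let g : Fin (d / c) → ZMod d × ZMod d := fun n => n.1 • ((0 : ZMod d), (c : ZMod d))
  have hg : Function.Injective g := by
    rintro ⟨n₁, hn₁⟩ ⟨n₂, hn₂⟩ h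
    have h' : (0 : ℕ) • (((d / c : ℕ) : ZMod d), (b : ZMod d)) + n₁ • ((0 : ZMod d), (c : ZMod d))
        = 0 • (((d / c : ℕ) : ZMod d), (b : ZMod d)) + n₂ • ((0 : ZMod d), (c : ZMod d)) := by
      simp only [zero_smul, zero_add]
      exact h
    obtain ⟨-, h2⟩ := Hgen_unique (b := b) hd hc hc0 hn₁ hc0 hn₂ h'
    exact Fin.ext h2
  have key : ∀ p, p ∈ ((AddMonoidHom.fst (ZMod d) (ZMod d)).ker ⊓ Hgen d c b :
      AddSubgroup (ZMod d × ZMod d)) ↔ p ∈ Set.range g := by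
    intro p
    rw [AddSubgroup.mem_inf, mem_Hgen_iff hd hc, AddMonoidHom.mem_ker]
    constructor
    · rintro ⟨hker, m, n, hm, hn, rfl⟩
      have h1 : ((m * (d / c) : ℕ) : ZMod d) = ((0 : ℕ) : ZMod d) := by
        rw [← comb_fst (b := b) m n]; exact_mod_cast hker
      have hmd : m * (d / c) < d := by nlinarith
      have : m * (d / c) = 0 := natCast_inj_of_lt hmd hd h1
      have hm0 : m = 0 := by
        rcases Nat.mul_eq_zero.mp this with h | h
        · exact h
        · omega
      refine ⟨⟨n, hn⟩, ?_⟩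
      show n • ((0 : ZMod d), (c : ZMod d)) = _
      rw [hm0, zero_smul, zero_add]
    · rintro ⟨⟨n, hn⟩, rfl⟩
      constructor
      · show (n • ((0 : ZMod d), (c : ZMod d))).1 = 0
        simp
      · exact ⟨0, n, hc0, hn, by rw [zero_smul, zero_add]⟩
  calc Nat.card ((AddMonoidHom.fst (ZMod d) (ZMod d)).ker ⊓ Hgen d c b :
        AddSubgroup (ZMod d × ZMod d)) = Nat.card (Set.range g) :=
        Nat.card_congr (Equiv.subtypeEquivRight key)
    _ = Nat.card (Fin (d / c)) := Nat.card_congr (Equiv.ofInjective g hg).symm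
    _ = d / c := by simp

end cards

section classify
variable {d : ℕ}

/-- Any subgroup of `ZMod d` of cardinality `c` is the multiples of `d / c`. -/
lemma zmod_subgroup_eq (hd : 0 < d) (P : AddSubgroup (ZMod d)) :
    P = AddSubgroup.zmultiples ((d / Nat.card P : ℕ) : ZMod d) := by
  haveI : NeZero d := ⟨hd.ne'⟩
  set c := Nat.card P with hcdef
  have hcd : c ∣ d := by
    have := AddSubgroup.card_addSubgroup_dvd_card P
    rwa [Nat.card_zmod] at this
  have hc0 : 0 < c := Nat.card_pos
  have hca : c * (d / c) = d := Nat.mul_div_cancel' hcd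
  have hle : P ≤ AddSubgroup.zmultiples ((d / c : ℕ) : ZMod d) := by
    intro x hx
    have h1 : c • (⟨x, hx⟩ : P) = 0 := card_nsmul_eq_zero'
    have h2 : c • x = 0 := by
      have := congrArg (Subtype.val) h1
      simpa using this
    have h3 : ((c * x.val : ℕ) : ZMod d) = 0 := by
      rw [Nat.cast_mul, ZMod.natCast_val, ZMod.cast_id]
      rw [nsmul_eq_mul] at h2
      exact_mod_cast h2
    have h4 : d ∣ c * x.val := (ZMod.natCast_eq_zero_iff _ _).mp h3
    have h5 : d / c ∣ x.val := by
      rcases h4 with ⟨t, ht⟩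
      refine ⟨t, ?_⟩
      have key : c * (d / c * t) = c * x.val := by rw [← mul_assoc, hca, ← ht]
      exact (Nat.eq_of_mul_eq_mul_left hc0 key).symm
    rcases h5 with ⟨t, ht⟩
    refine AddSubgroup.mem_zmultiples_iff.mpr ⟨t, ?_⟩
    rw [natCast_zsmul, nsmul_eq_mul, ← Nat.cast_mul, mul_comm, ← ht, ZMod.natCast_val,
      ZMod.cast_id]
  have hcard : Nat.card (AddSubgroup.zmultiples ((d / c : ℕ) : ZMod d)) = c := by
    rw [Nat.card_zmultiples, ZMod.addOrderOf_coe _ hd.ne',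
      Nat.gcd_eq_right (Nat.div_dvd_of_dvd hcd)]
    exact Nat.div_div_self hcd hd.ne'
  exact AddSubgroup.eq_of_le_of_card_ge hle (by rw [hcard])

/-- Cardinality of a subgroup decomposes along a homomorphism. -/
lemma card_eq_card_map_mul_card_ker {G M : Type*} [AddGroup G] [AddGroup M]
    (f : G →+ M) (H : AddSubgroup G) :
    Nat.card H = Nat.card (H.map f) * Nat.card (f.ker ⊓ H : AddSubgroup G) := by
  classical
  have h1 : Nat.card H = Nat.card (H ⧸ (f.comp H.subtype).ker) *
      Nat.card (f.comp H.subtype).ker :=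
    AddSubgroup.card_eq_card_quotient_mul_card_addSubgroup _
  have h2 : Nat.card (H ⧸ (f.comp H.subtype).ker) = Nat.card (H.map f) := by
    have e := QuotientAddGroup.quotientKerEquivRange (f.comp H.subtype)
    have hr : (f.comp H.subtype).range = H.map f := by
      rw [AddMonoidHom.range_comp, AddSubgroup.range_subtype]
    rw [Nat.card_congr e.toEquiv, hr]
  have h3 : Nat.card (f.comp H.subtype).ker = Nat.card (f.ker ⊓ H : AddSubgroup G) := by
    have hk : (f.comp H.subtype).ker = (f.ker ⊓ H).addSubgroupOf H := by
      rw [AddSubgroup.inf_addSubgroupOf_right]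
      rfl
    rw [hk, Nat.card_congr (AddSubgroup.addSubgroupOfEquivOfLe inf_le_right).toEquiv]
  rw [h1, h2, h3]

end classify

section surj
variable {d : ℕ}

lemma exists_Hgen (hd : 0 < d) (H : AddSubgroup (ZMod d × ZMod d)) (hH : Nat.card H = d) :
    ∃ c b : ℕ, c ∣ d ∧ b < c ∧ H = Hgen d c b := by
  haveI : NeZero d := ⟨hd.ne'⟩
  set f1 := AddMonoidHom.fst (ZMod d) (ZMod d) with hf1
  set f2 := AddMonoidHom.snd (ZMod d) (ZMod d) with hf2
  set P := H.map f1 with hPdef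
  set K := f1.ker ⊓ H with hKdef
  set c := Nat.card P with hcdef
  have hsplit : Nat.card H = Nat.card P * Nat.card K := card_eq_card_map_mul_card_ker f1 H
  have hc0 : 0 < c := Nat.card_pos
  have hdc : c * Nat.card K = d := by rw [hcdef, ← hsplit, hH]
  have hcd : c ∣ d := ⟨Nat.card K, hdc.symm⟩
  have hKcard : Nat.card K = d / c := by
    have h := hdc
    rw [mul_comm] at h
    exact (Nat.div_eq_of_eq_mul_left hc0 h.symm).symm
  -- the first projection of `H` is the multiples of `d / c`
  have hPeq : P = AddSubgroup.zmultiples ((d / c : ℕ) : ZMod d) := zmod_subgroup_eq hd P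
  have hmemP : ((d / c : ℕ) : ZMod d) ∈ P := by
    rw [hPeq]; exact AddSubgroup.mem_zmultiples _
  obtain ⟨p, hpH, hp1⟩ := AddSubgroup.mem_map.mp hmemP
  -- `K` maps isomorphically onto its image under the second projection
  have hbot : f2.ker ⊓ K = ⊥ := by
    rw [eq_bot_iff]
    rintro ⟨x1, x2⟩ hx
    obtain ⟨hx2, hxK⟩ := AddSubgroup.mem_inf.mp hx
    obtain ⟨hx1, -⟩ := AddSubgroup.mem_inf.mp hxK
    have e1 : x1 = 0 := hx1
    have e2 : x2 = 0 := hx2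
    simp [e1, e2, AddSubgroup.mem_bot, Prod.ext_iff]
  have hQcard : Nat.card (K.map f2) = d / c := by
    have := card_eq_card_map_mul_card_ker f2 K
    rw [hbot] at this
    simpa [hKcard] using this.symm
  have hQeq : K.map f2 = AddSubgroup.zmultiples ((c : ℕ) : ZMod d) := by
    have := zmod_subgroup_eq hd (K.map f2)
    rwa [hQcard, Nat.div_div_self hcd hd.ne'] at this
  have hmemQ : ((c : ℕ) : ZMod d) ∈ K.map f2 := by
    rw [hQeq]; exact AddSubgroup.mem_zmultiples _
  obtain ⟨k, hkK, hk2⟩ := AddSubgroup.mem_map.mp hmemQ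
  obtain ⟨hk1, hkH⟩ := AddSubgroup.mem_inf.mp hkK
  have h0c : ((0 : ZMod d), (c : ZMod d)) ∈ H := by
    have : k = ((0 : ZMod d), (c : ZMod d)) := Prod.ext hk1 hk2
    rwa [this] at hkH
  -- normalize the second coordinate of `p`
  set b := p.2.val % c with hbdef
  set t := p.2.val / c with htdef
  have hx : (((d / c : ℕ) : ZMod d), ((b : ℕ) : ZMod d))
      = p - t • ((0 : ZMod d), (c : ZMod d)) := by
    have hval : p.2.val = c * t + b := (Nat.div_add_mod p.2.val c).symm
    refine Prod.ext ?_ ?_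
    · show ((d / c : ℕ) : ZMod d) = p.1 - t • (0 : ZMod d)
      rw [smul_zero, sub_zero]
      exact hp1.symm
    · show ((b : ℕ) : ZMod d) = p.2 - t • ((c : ℕ) : ZMod d)
      have h2 : ((p.2.val : ℕ) : ZMod d) = p.2 := by
        rw [ZMod.natCast_val, ZMod.cast_id]
      rw [nsmul_eq_mul, ← h2, hval]
      push_cast
      ring
  have hxH : (((d / c : ℕ) : ZMod d), ((b : ℕ) : ZMod d)) ∈ H := by
    rw [hx]
    exact sub_mem hpH (AddSubgroup.nsmul_mem H h0c t)
  have hle : Hgen d c b ≤ H := by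
    rw [Hgen]
    rw [AddSubgroup.closure_le]
    rw [Set.insert_subset_iff, Set.singleton_subset_iff]
    exact ⟨hxH, h0c⟩
  have heq : Hgen d c b = H :=
    AddSubgroup.eq_of_le_of_card_ge hle (by rw [hH, card_Hgen hd hcd])
  exact ⟨c, b, hcd, Nat.mod_lt _ hc0, heq.symm⟩

end surj

section inj
variable {d : ℕ}

lemma Hgen_inj (hd : 0 < d) {c₁ b₁ c₂ b₂ : ℕ} (h1 : c₁ ∣ d) (hb₁ : b₁ < c₁)
    (h2 : c₂ ∣ d) (hb₂ : b₂ < c₂) (h : Hgen d c₁ b₁ = Hgen d c₂ b₂) :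
    c₁ = c₂ ∧ b₁ = b₂ := by
  have hcc : c₁ = c₂ := by
    have e : d / c₁ = d / c₂ := by
      rw [← card_ker_inf_Hgen (b := b₁) hd h1, h, card_ker_inf_Hgen (b := b₂) hd h2]
    have e2 : d / (d / c₁) = d / (d / c₂) := by rw [e]
    rwa [Nat.div_div_self h1 hd.ne', Nat.div_div_self h2 hd.ne'] at e2
  subst hcc
  refine ⟨rfl, ?_⟩
  set c := c₁ with hc
  have hc0 : 0 < c := by omega
  rcases Nat.lt_or_ge c 2 with hc1 | hc2
  · omega
  · have hca : c * (d / c) = d := Nat.mul_div_cancel' h1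
    have ha0 : 0 < d / c := Nat.div_pos (Nat.le_of_dvd hd h1) hc0
    have hx1 : (((d / c : ℕ) : ZMod d), ((b₁ : ℕ) : ZMod d)) ∈ Hgen d c b₂ := by
      rw [← h, Hgen]
      exact AddSubgroup.subset_closure (Set.mem_insert _ _)
    obtain ⟨m, n, hm, hn, heq⟩ := (mem_Hgen_iff hd h1 _).mp hx1
    have hfst : ((m * (d / c) : ℕ) : ZMod d) = (((d / c) : ℕ) : ZMod d) := by
      rw [← comb_fst (b := b₂) m n, heq]
    have hmad : m * (d / c) < d := by nlinarith
    have had : d / c < d := Nat.div_lt_self hd (by omega)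
    have hm1 : m = 1 := by
      have h' := natCast_inj_of_lt hmad had hfst
      have h'' : m * (d / c) = 1 * (d / c) := by rw [one_mul]; exact h'
      exact Nat.eq_of_mul_eq_mul_right ha0 h''
  
    have hsnd : ((m * b₂ + n * c : ℕ) : ZMod d) = ((b₁ : ℕ) : ZMod d) := by
      rw [← comb_snd m n, heq]
    have hlt1 : m * b₂ + n * c < d := by nlinarith
    have hlt2 : b₁ < d := by
      calc b₁ < c := hb₁
        _ ≤ d := Nat.le_of_dvd hd h1
    have hval : m * b₂ + n * c = b₁ := natCast_inj_of_lt hlt1 hlt2 hsnd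
    rw [hm1, one_mul] at hval
    rcases Nat.eq_zero_or_pos n with hn0 | hn0
    · rw [hn0, zero_mul] at hval
      omega
    · have : c ≤ n * c := Nat.le_mul_of_pos_left c hn0
      omega

end inj

/-- For every positive integer `d`, the number of additive subgroups of
`(ℤ/dℤ) × (ℤ/dℤ)` of cardinality `d` equals `σ₁(d)`. -/
theorem count_order_d_subgroups (d : ℕ) (hd : 0 < d) :
    Nat.card {H : AddSubgroup (ZMod d × ZMod d) // Nat.card H = d} = sigma 1 d := by
  classical
  let f : ((c : {c // c ∈ d.divisors}) × Fin c.1) →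
      {H : AddSubgroup (ZMod d × ZMod d) // Nat.card H = d} :=
    fun q => ⟨Hgen d q.1.1 q.2.1, card_Hgen hd (Nat.dvd_of_mem_divisors q.1.2)⟩
  have hbij : Function.Bijective f := by
    constructor
    · rintro ⟨⟨c₁, hc₁⟩, ⟨m₁, hm₁⟩⟩ ⟨⟨c₂, hc₂⟩, ⟨m₂, hm₂⟩⟩ hfe
      have hEq : Hgen d c₁ m₁ = Hgen d c₂ m₂ := congrArg Subtype.val hfe
      obtain ⟨hc, hb⟩ := Hgen_inj hd (Nat.dvd_of_mem_divisors hc₁) hm₁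
        (Nat.dvd_of_mem_divisors hc₂) hm₂ hEq
      subst hc
      subst hb
      rfl
    · rintro ⟨H, hH⟩
      obtain ⟨c, b, hcd, hb, heq⟩ := exists_Hgen hd H hH
      exact ⟨⟨⟨c, Nat.mem_divisors.mpr ⟨hcd, hd.ne'⟩⟩, ⟨b, hb⟩⟩, Subtype.ext heq.symm⟩
  rw [← Nat.card_congr (Equiv.ofBijective f hbij)]
  rw [Nat.card_eq_fintype_card, Fintype.card_sigma]
  simp only [Fintype.card_fin]
  rw [Finset.sum_coe_sort d.divisors (fun c => c)]
  simp [sigma, pow_one]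
end

section
/- For every positive integer d, the number of pairs (G, g), where G is an additive subgroup of (ℤ/dℤ) × (ℤ/dℤ) of cardinality d and g is a nonzero element of G, is equal to σ₁(d)·(d − 1). -/
open AddSubgroup

theorem AddSubgroup.card_eq_card_map_fst_mul_card_comap_inr {A B : Type*} [AddGroup A]
    [AddGroup B] (G : AddSubgroup (A × B)) :
    Nat.card G =
      Nat.card (G.map (AddMonoidHom.fst A B)) * Nat.card (G.comap (AddMonoidHom.inr A B)) := by
  set f := (AddMonoidHom.fst A B).comp G.subtype
  have hrange : f.range = G.map (AddMonoidHom.fst A B) := by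
    rw [AddMonoidHom.range_comp, range_subtype]
  have hker : Nat.card (G.comap (AddMonoidHom.inr A B)) = Nat.card f.ker := by
    refine Nat.card_eq_of_bijective (fun y => ⟨⟨(0, y), y.2⟩, rfl⟩) ⟨fun y y' h => ?_, fun x => ?_⟩
    · simpa using congrArg (fun x : f.ker => x.1.1.2) h
    · refine ⟨⟨x.1.1.2, ?_⟩, ?_⟩
      · have : ((0 : A), x.1.1.2) = x.1.1 := Prod.ext x.2.symm rfl
        simp [this]
      · ext
        exacts [x.2.symm, rfl]
  rw [← card_mul_index f.ker, index_ker, hrange, hker, mul_comm]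

theorem card_pairs_addSubgroup_mem_ne_zero {A : Type*} [AddGroup A] [Finite A] (n : ℕ) :
    Nat.card {p : AddSubgroup A × A // Nat.card p.1 = n ∧ p.2 ∈ p.1 ∧ p.2 ≠ 0} =
      Nat.card {H : AddSubgroup A // Nat.card H = n} * (n - 1) := by
  let e : {p : AddSubgroup A × A // Nat.card p.1 = n ∧ p.2 ∈ p.1 ∧ p.2 ≠ 0} ≃
      Σ H : {H : AddSubgroup A // Nat.card H = n}, {x : H.1 // x ≠ 0} :=
    { toFun := fun p =>
        ⟨⟨p.1.1, p.2.1⟩, ⟨p.1.2, p.2.2.1⟩, fun h => p.2.2.2 (congrArg Subtype.val h)⟩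
      invFun := fun q => ⟨(q.1.1, q.2.1.1), q.1.2, q.2.1.2, fun h => q.2.2 (Subtype.ext h)⟩
      left_inv := fun _ => rfl
      right_inv := fun _ => rfl }
  have hne (H : AddSubgroup A) : Nat.card {x : H // x ≠ 0} = Nat.card H - 1 := by
    have := Fintype.ofFinite H
    classical
    rw [Nat.card_eq_fintype_card, Nat.card_eq_fintype_card]
    exact Set.card_ne_eq 0
  have := Fintype.ofFinite {H : AddSubgroup A // Nat.card H = n}
  rw [Nat.card_congr e, Nat.card_sigma,
    Finset.sum_congr rfl fun H _ => (hne H.1).trans (by rw [H.2]), Finset.sum_const, smul_eq_mul,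
    Finset.card_univ, Nat.card_eq_fintype_card]

section

variable {d : ℕ}

theorem ZMod.intCast_mem_zmultiples_natCast_iff {c : ℕ} (hc : c ∣ d) (x : ℤ) :
    (x : ZMod d) ∈ zmultiples (c : ZMod d) ↔ (c : ℤ) ∣ x := by
  constructor
  · rintro ⟨k, hk⟩
    have hdvd : (d : ℤ) ∣ x - k * c := by
      rw [← ZMod.intCast_eq_intCast_iff_dvd_sub, ← hk]
      simp
    have hcx : (c : ℤ) ∣ x - k * c := (Int.natCast_dvd_natCast.mpr hc).trans hdvd
    simpa using hcx.add (dvd_mul_left (c : ℤ) k)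
  · rintro ⟨k, rfl⟩
    exact ⟨k, by simp [mul_comm]⟩

theorem ZMod.card_zmultiples_natCast [NeZero d] {c : ℕ} (hc : c ∣ d) :
    Nat.card (zmultiples (c : ZMod d)) = d / c := by
  rw [Nat.card_zmultiples, ZMod.addOrderOf_coe c (NeZero.ne d), Nat.gcd_eq_right hc]

theorem ZMod.addSubgroup_eq_zmultiples_div_card [NeZero d] (K : AddSubgroup (ZMod d)) :
    K = zmultiples ((d / Nat.card K : ℕ) : ZMod d) := by
  set k := Nat.card K
  have hkd : k ∣ d := by simpa using K.card_addSubgroup_dvd_card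
  have hk : k ≠ 0 := Nat.card_pos.ne'
  refine eq_of_le_of_card_ge (fun x hx => ?_) ?_
  · obtain ⟨x, rfl⟩ := ZMod.intCast_surjective x
    have hkx : ((k * x : ℤ) : ZMod d) = 0 := by
      have h := congrArg Subtype.val (card_nsmul_eq_zero' (x := (⟨x, hx⟩ : K)))
      rw [AddSubgroup.coe_nsmul, nsmul_eq_mul] at h
      push_cast; exact h
    rw [ZMod.intCast_zmod_eq_zero_iff_dvd, ← Nat.mul_div_cancel' hkd, Nat.cast_mul] at hkx
    exact (ZMod.intCast_mem_zmultiples_natCast_iff (Nat.div_dvd_of_dvd hkd) x).mpr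
      ((mul_dvd_mul_iff_left (by exact_mod_cast hk)).mp hkx)
  · rw [ZMod.card_zmultiples_natCast (Nat.div_dvd_of_dvd hkd), Nat.div_div_self hkd (NeZero.ne d)]

variable (d) in
def hermiteSubgroup (a b : ℕ) : AddSubgroup (ZMod d × ZMod d) :=
  closure {((a : ZMod d), (b : ZMod d)), (0, ((d / a : ℕ) : ZMod d))}

theorem map_fst_hermiteSubgroup (a b : ℕ) :
    (hermiteSubgroup d a b).map (AddMonoidHom.fst _ _) = zmultiples (a : ZMod d) := by
  rw [hermiteSubgroup, AddMonoidHom.map_closure, Set.image_pair, Set.pair_comm]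
  simp [closure_insert_zero, zmultiples_eq_closure]

theorem comap_inr_hermiteSubgroup [NeZero d] {a : ℕ} (ha : a ∣ d) (b : ℕ) :
    (hermiteSubgroup d a b).comap (AddMonoidHom.inr _ _) = zmultiples ((d / a : ℕ) : ZMod d) := by
  refine le_antisymm (fun y hy => ?_) (zmultiples_le.mpr (subset_closure (by simp)))
  obtain ⟨m, n, h⟩ := mem_closure_pair.mp hy
  have h1 := congrArg Prod.fst h
  have h2 := congrArg Prod.snd h
  simp only [Prod.smul_mk, Prod.mk_add_mk, AddMonoidHom.inr_apply, smul_zero, add_zero,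
    zsmul_eq_mul] at h1 h2
  have ha0 : a ≠ 0 := by rintro rfl; exact NeZero.ne d (zero_dvd_iff.mp ha)
  have hm : ((d / a : ℕ) : ℤ) ∣ m := by
    have : ((d / a : ℕ) * a : ℤ) ∣ m * a := by
      rw [← Nat.cast_mul, Nat.div_mul_cancel ha, ← ZMod.intCast_zmod_eq_zero_iff_dvd]
      push_cast
      exact h1
    exact (mul_dvd_mul_iff_right (by exact_mod_cast ha0)).mp this
  obtain ⟨t, rfl⟩ := hm
  refine ⟨t * b + n, ?_⟩
  rw [← h2]
  simp only [zsmul_eq_mul, Int.cast_mul, Int.cast_add, Int.cast_natCast]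
  ring

theorem card_hermiteSubgroup [NeZero d] {a : ℕ} (ha : a ∣ d) (b : ℕ) :
    Nat.card (hermiteSubgroup d a b) = d := by
  rw [card_eq_card_map_fst_mul_card_comap_inr, map_fst_hermiteSubgroup,
    comap_inr_hermiteSubgroup ha, ZMod.card_zmultiples_natCast ha,
    ZMod.card_zmultiples_natCast (Nat.div_dvd_of_dvd ha), Nat.div_div_self ha (NeZero.ne d),
    Nat.div_mul_cancel ha]

theorem hermiteSubgroup_inj [NeZero d] {a b a' b' : ℕ} (ha : a ∣ d) (hb : b < d / a)
    (ha' : a' ∣ d) (hb' : b' < d / a') :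
    hermiteSubgroup d a b = hermiteSubgroup d a' b' ↔ a = a' ∧ b = b' := by
  refine ⟨fun h => ?_, by rintro ⟨rfl, rfl⟩; rfl⟩
  obtain rfl : a = a' := by
    have := congrArg (fun H => Nat.card (H.map (AddMonoidHom.fst _ _))) h
    simp only [map_fst_hermiteSubgroup, ZMod.card_zmultiples_natCast ha,
      ZMod.card_zmultiples_natCast ha'] at this
    rw [← Nat.div_div_self ha (NeZero.ne d), this, Nat.div_div_self ha' (NeZero.ne d)]
  have hmem : ((b' - b : ℤ) : ZMod d) ∈ (hermiteSubgroup d a b).comap (AddMonoidHom.inr _ _) := by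
    have hgen : ∀ b₀, ((a : ZMod d), (b₀ : ZMod d)) ∈ hermiteSubgroup d a b₀ := fun _ =>
      subset_closure (Set.mem_insert _ _)
    rw [mem_comap]
    convert sub_mem (h ▸ hgen b') (hgen b) using 1
    ext <;> simp
  rw [comap_inr_hermiteSubgroup ha,
    ZMod.intCast_mem_zmultiples_natCast_iff (Nat.div_dvd_of_dvd ha)] at hmem
  have := Int.eq_zero_of_abs_lt_dvd hmem (by rw [abs_lt]; omega)
  omega

theorem exists_hermiteSubgroup_eq [NeZero d] (G : AddSubgroup (ZMod d × ZMod d))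
    (hG : Nat.card G = d) : ∃ a b : ℕ, a ∣ d ∧ b < d / a ∧ hermiteSubgroup d a b = G := by
  set H := G.map (AddMonoidHom.fst _ _)
  set a := d / Nat.card H
  have hHd : Nat.card H ∣ d := by simpa using H.card_addSubgroup_dvd_card
  have ha : a ∣ d := Nat.div_dvd_of_dvd hHd
  have hca : d / a = Nat.card H := Nat.div_div_self hHd (NeZero.ne d)
  have hK : G.comap (AddMonoidHom.inr _ _) = zmultiples ((d / a : ℕ) : ZMod d) := by
    have hcard : Nat.card (G.comap (AddMonoidHom.inr _ _)) = a := by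
      refine (Nat.div_eq_of_eq_mul_right Nat.card_pos ?_).symm
      rw [← card_eq_card_map_fst_mul_card_comap_inr, hG]
    rw [ZMod.addSubgroup_eq_zmultiples_div_card (G.comap _), hcard]
  obtain ⟨⟨x, y⟩, hxy, rfl⟩ : (a : ZMod d) ∈ H :=
    (ZMod.addSubgroup_eq_zmultiples_div_card H).symm ▸ mem_zmultiples _
  set c := d / a
  have hcK (k : ℕ) : ((0 : ZMod d), ((c * k : ℕ) : ZMod d)) ∈ G := by
    have : ((c * k : ℕ) : ZMod d) ∈ G.comap (AddMonoidHom.inr _ _) := by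
      rw [hK]
      exact ⟨k, by simp [mul_comm]⟩
    exact this
  refine ⟨a, y.val % c, ha, Nat.mod_lt _ (by rw [hca]; exact Nat.card_pos), ?_⟩
  refine eq_of_le_of_card_ge ((closure_le _).mpr ?_) (by rw [hG, card_hermiteSubgroup ha])
  rintro _ (rfl | rfl)
  · have hy : ((y.val % c : ℕ) : ZMod d) = y - ((c * (y.val / c) : ℕ) : ZMod d) := by
      rw [eq_sub_iff_add_eq', ← Nat.cast_add, Nat.div_add_mod, ZMod.natCast_zmod_val]
    simpa [hy] using sub_mem hxy (hcK (y.val / c))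
  · simpa using hcK 1

theorem ZMod.card_prod_addSubgroups_of_card_eq [NeZero d] :
    Nat.card {G : AddSubgroup (ZMod d × ZMod d) // Nat.card G = d} = sigma 1 d := by
  let S := d.divisors.sigma fun a => Finset.range (d / a)
  have hS : Nat.card S = sigma 1 d := by
    rw [Nat.card_eq_fintype_card, Fintype.card_coe, Finset.card_sigma]
    simp only [Finset.card_range, sigma, pow_one]
    exact Nat.sum_div_divisors d fun e => e
  rw [← hS]
  refine (Nat.card_eq_of_bijective
    (fun p => ⟨hermiteSubgroup d p.1.1 p.1.2, card_hermiteSubgroup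
      (Nat.dvd_of_mem_divisors (Finset.mem_sigma.mp p.2).1) _⟩) ⟨?_, ?_⟩).symm
  · rintro ⟨⟨a, b⟩, hab⟩ ⟨⟨a', b'⟩, hab'⟩ h
    simp only [S, Finset.mem_sigma, Nat.mem_divisors, Finset.mem_range] at hab hab'
    obtain ⟨rfl, rfl⟩ :=
      (hermiteSubgroup_inj hab.1.1 hab.2 hab'.1.1 hab'.2).mp (congrArg Subtype.val h)
    rfl
  · rintro ⟨G, hG⟩
    obtain ⟨a, b, ha, hb, rfl⟩ := exists_hermiteSubgroup_eq G hG
    exact ⟨⟨⟨a, b⟩, by simp [S, ha, hb, NeZero.ne d]⟩, rfl⟩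

end

/-- For every positive integer `d`, the number of pairs `(G, g)` with `G` an additive
subgroup of `(ℤ/dℤ) × (ℤ/dℤ)` of cardinality `d` and `g` a nonzero element of `G`,
equals `σ₁(d) * (d - 1)`. -/
theorem count_subgroup_element_pairs (d : ℕ) (hd : 0 < d) :
    Nat.card {p : AddSubgroup (ZMod d × ZMod d) × (ZMod d × ZMod d) //
      Nat.card p.1 = d ∧ p.2 ∈ p.1 ∧ p.2 ≠ 0} = sigma 1 d * (d - 1) := by
  have : NeZero d := ⟨hd.ne'⟩
  rw [card_pairs_addSubgroup_mem_ne_zero, ZMod.card_prod_addSubgroups_of_card_eq]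
end

section
/- For every positive integer d, the identity ∑_{i=1}^{d−1} σ₁(i)·σ₁(d−i) = (1/12 − d/2)·σ₁(d) + (5/12)·σ₃(d) holds in the rational numbers. (For d = 1 the left-hand side is the empty sum, equal to 0.) -/
open Finset

section SigmaConvAux

lemma sigma_cast (k n : ℕ) : (sigma k n : ℚ) = ∑ e ∈ n.divisors, (e : ℚ) ^ k := by
  simp [sigma]

lemma sigma1_cast (n : ℕ) : (sigma 1 n : ℚ) = ∑ p ∈ n.divisorsAntidiagonal, (p.1 : ℚ) := by
  rw [Nat.sum_divisorsAntidiagonal (fun d _ => (d : ℚ)), sigma_cast]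
  simp

/-- The set of quadruples `((a,x),(b,y))` of positive naturals with `a*x + b*y = n`. -/
def Qd (n : ℕ) : Finset ((ℕ × ℕ) × ℕ × ℕ) :=
  ((Finset.Icc 1 n ×ˢ Finset.Icc 1 n) ×ˢ Finset.Icc 1 n ×ˢ Finset.Icc 1 n).filter
    fun q => q.1.1 * q.1.2 + q.2.1 * q.2.2 = n

lemma mem_Qd {n : ℕ} {q : (ℕ × ℕ) × ℕ × ℕ} :
    q ∈ Qd n ↔ 1 ≤ q.1.1 ∧ 1 ≤ q.1.2 ∧ 1 ≤ q.2.1 ∧ 1 ≤ q.2.2 ∧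
      q.1.1 * q.1.2 + q.2.1 * q.2.2 = n := by
  obtain ⟨⟨a, x⟩, b, y⟩ := q
  simp only [Qd, mem_filter, mem_product, mem_Icc]
  constructor
  · rintro ⟨⟨⟨⟨ha, _⟩, hx, _⟩, ⟨hb, _⟩, hy, _⟩, he⟩
    exact ⟨ha, hx, hb, hy, he⟩
  · rintro ⟨ha, hx, hb, hy, he⟩
    have h1 : a ≤ a * x := Nat.le_mul_of_pos_right a hx
    have h2 : x ≤ a * x := Nat.le_mul_of_pos_left x ha
    have h3 : b ≤ b * y := Nat.le_mul_of_pos_right b hy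
    have h4 : y ≤ b * y := Nat.le_mul_of_pos_left y hb
    exact ⟨⟨⟨⟨ha, by omega⟩, hx, by omega⟩, ⟨hb, by omega⟩, hy, by omega⟩, he⟩

/-- `∑_{y<x} w = ∑_{a<b} w ∘ M`, `M((a,x),(b,y)) = ((a,x+y),(b-a,y))`. -/
lemma sum_ltX {n : ℕ} (w : (ℕ × ℕ) × ℕ × ℕ → ℚ) :
    ∑ q ∈ (Qd n).filter (fun q => q.2.2 < q.1.2), w q =
      ∑ q ∈ (Qd n).filter (fun q => q.1.1 < q.2.1),
        w ((q.1.1, q.1.2 + q.2.2), (q.2.1 - q.1.1, q.2.2)) := by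
  refine Finset.sum_bij' (i := fun q _ => ((q.1.1, q.1.2 - q.2.2), (q.2.1 + q.1.1, q.2.2)))
    (j := fun q _ => ((q.1.1, q.1.2 + q.2.2), (q.2.1 - q.1.1, q.2.2))) ?_ ?_ ?_ ?_ ?_
  · rintro ⟨⟨a, x⟩, b, y⟩ hq
    simp only [mem_filter, mem_Qd] at hq ⊢
    obtain ⟨⟨ha, hx, hb, hy, he⟩, hlt⟩ := hq
    have h1 := Nat.mul_sub a x y
    have h2 : a * y ≤ a * x := Nat.mul_le_mul_left a hlt.le
    have h3 : (b + a) * y = b * y + a * y := Nat.add_mul b a y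
    exact ⟨⟨ha, by omega, by omega, hy, by omega⟩, by omega⟩
  · rintro ⟨⟨a, x⟩, b, y⟩ hq
    simp only [mem_filter, mem_Qd] at hq ⊢
    obtain ⟨⟨ha, hx, hb, hy, he⟩, hlt⟩ := hq
    have h1 : a * (x + y) = a * x + a * y := Nat.mul_add a x y
    have h2 := Nat.sub_mul b a y
    have h3 : a * y ≤ b * y := Nat.mul_le_mul_right y hlt.le
    exact ⟨⟨ha, by omega, by omega, hy, by omega⟩, by omega⟩
  · rintro ⟨⟨a, x⟩, b, y⟩ hq
    simp only [mem_filter, mem_Qd] at hq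
    simp only [Prod.mk.injEq, true_and, and_true, eq_self_iff_true]
    omega
  · rintro ⟨⟨a, x⟩, b, y⟩ hq
    simp only [mem_filter, mem_Qd] at hq
    simp only [Prod.mk.injEq, true_and, and_true, eq_self_iff_true]
    omega
  · rintro ⟨⟨a, x⟩, b, y⟩ hq
    simp only [mem_filter, mem_Qd] at hq
    have e : ((a, x - y + y), b + a - a, y) = ((a, x), b, y) := by
      simp only [Prod.mk.injEq, true_and, and_true, eq_self_iff_true]; omega
    exact (congrArg w e).symm

/-- `∑_{x<y} w = ∑_{b<a} w ∘ M'`, `M'((a,x),(b,y)) = ((a-b,x),(b,x+y))`. -/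
lemma sum_ltY {n : ℕ} (w : (ℕ × ℕ) × ℕ × ℕ → ℚ) :
    ∑ q ∈ (Qd n).filter (fun q => q.1.2 < q.2.2), w q =
      ∑ q ∈ (Qd n).filter (fun q => q.2.1 < q.1.1),
        w ((q.1.1 - q.2.1, q.1.2), (q.2.1, q.1.2 + q.2.2)) := by
  refine Finset.sum_bij' (i := fun q _ => ((q.1.1 + q.2.1, q.1.2), (q.2.1, q.2.2 - q.1.2)))
    (j := fun q _ => ((q.1.1 - q.2.1, q.1.2), (q.2.1, q.1.2 + q.2.2))) ?_ ?_ ?_ ?_ ?_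
  · rintro ⟨⟨a, x⟩, b, y⟩ hq
    simp only [mem_filter, mem_Qd] at hq ⊢
    obtain ⟨⟨ha, hx, hb, hy, he⟩, hlt⟩ := hq
    have h1 := Nat.mul_sub b y x
    have h2 : b * x ≤ b * y := Nat.mul_le_mul_left b hlt.le
    have h3 : (a + b) * x = a * x + b * x := Nat.add_mul a b x
    exact ⟨⟨by omega, hx, hb, by omega, by omega⟩, by omega⟩
  · rintro ⟨⟨a, x⟩, b, y⟩ hq
    simp only [mem_filter, mem_Qd] at hq ⊢
    obtain ⟨⟨ha, hx, hb, hy, he⟩, hlt⟩ := hq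
    have h1 : b * (x + y) = b * x + b * y := Nat.mul_add b x y
    have h2 := Nat.sub_mul a b x
    have h3 : b * x ≤ a * x := Nat.mul_le_mul_right x hlt.le
    exact ⟨⟨by omega, hx, hb, by omega, by omega⟩, by omega⟩
  · rintro ⟨⟨a, x⟩, b, y⟩ hq
    simp only [mem_filter, mem_Qd] at hq
    simp only [Prod.mk.injEq, true_and, and_true, eq_self_iff_true]
    omega
  · rintro ⟨⟨a, x⟩, b, y⟩ hq
    simp only [mem_filter, mem_Qd] at hq
    simp only [Prod.mk.injEq, true_and, and_true, eq_self_iff_true]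
    omega
  · rintro ⟨⟨a, x⟩, b, y⟩ hq
    simp only [mem_filter, mem_Qd] at hq
    have e : ((a + b - b, x), b, x + (y - x)) = ((a, x), b, y) := by
      simp only [Prod.mk.injEq, true_and, and_true, eq_self_iff_true]; omega
    exact (congrArg w e).symm

/-- swap symmetry between the `b<a` and `a<b` regions. -/
lemma sum_swapQ {n : ℕ} (w : (ℕ × ℕ) × ℕ × ℕ → ℚ) :
    ∑ q ∈ (Qd n).filter (fun q => q.2.1 < q.1.1), w q =
      ∑ q ∈ (Qd n).filter (fun q => q.1.1 < q.2.1), w (q.2, q.1) := by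
  refine Finset.sum_bij' (i := fun q _ => (q.2, q.1)) (j := fun q _ => (q.2, q.1))
    ?_ ?_ ?_ ?_ ?_ <;> rintro ⟨⟨a, x⟩, b, y⟩ hq <;>
    simp only [mem_filter, mem_Qd] at hq ⊢ <;> obtain ⟨⟨ha, hx, hb, hy, he⟩, hlt⟩ := hq
  · exact ⟨⟨hb, hy, ha, hx, by omega⟩, hlt⟩
  · exact ⟨⟨hb, hy, ha, hx, by omega⟩, hlt⟩

lemma sum_tri {α : Type*} (s : Finset α) (f g : α → ℕ) (w : α → ℚ) :
    ∑ q ∈ s, w q =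
      (∑ q ∈ s.filter fun q => g q < f q, w q) +
      (∑ q ∈ s.filter fun q => f q = g q, w q) +
      (∑ q ∈ s.filter fun q => f q < g q, w q) := by
  classical
  rw [← Finset.sum_filter_add_sum_filter_not s (fun q => g q < f q) w, add_assoc]
  congr 1
  rw [← Finset.sum_filter_add_sum_filter_not (s.filter fun q => ¬ g q < f q)
    (fun q => f q = g q) w, Finset.filter_filter, Finset.filter_filter]
  congr 1
  · exact Finset.sum_congr (Finset.filter_congr fun q _ => by omega) (fun _ _ => rfl)
  · exact Finset.sum_congr (Finset.filter_congr fun q _ => by omega) (fun _ _ => rfl)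

/-- diagonal `x = y`. -/
lemma sum_diagX {n : ℕ} (w : ℕ → ℕ → ℚ) :
    ∑ q ∈ (Qd n).filter (fun q => q.1.2 = q.2.2), w q.1.1 q.2.1 =
      ∑ p ∈ n.divisorsAntidiagonal, ∑ a ∈ Ico 1 p.2, w a (p.2 - a) := by
  rw [Finset.sum_sigma' n.divisorsAntidiagonal (fun p => Ico 1 p.2) (fun p a => w a (p.2 - a))]
  refine (Finset.sum_bij'
    (i := fun (t : (_ : ℕ × ℕ) × ℕ) _ => ((t.2, t.1.1), (t.1.2 - t.2, t.1.1)))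
    (j := fun q _ => (⟨(q.1.2, q.1.1 + q.2.1), q.1.1⟩ : (_ : ℕ × ℕ) × ℕ))
    ?_ ?_ ?_ ?_ ?_).symm
  · rintro ⟨⟨d, m⟩, a⟩ ht
    simp only [Finset.mem_sigma, Nat.mem_divisorsAntidiagonal, mem_Ico] at ht
    obtain ⟨⟨hdm, hn⟩, ha1, ham⟩ := ht
    have hd : 1 ≤ d := by
      rcases Nat.eq_zero_or_pos d with h | h
      · subst h; simp at hdm; omega
      · exact h
    have h1 := Nat.sub_mul m a d
    have h2 : a * d ≤ m * d := Nat.mul_le_mul_right d ham.le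
    have h3 : m * d = d * m := Nat.mul_comm m d
    simp only [mem_filter, mem_Qd]
    exact ⟨⟨ha1, hd, by omega, hd, by omega⟩, trivial⟩
  · rintro ⟨⟨a, x⟩, b, y⟩ hq
    simp only [mem_filter, mem_Qd] at hq
    obtain ⟨⟨ha, hx, hb, hy, he⟩, hxy⟩ := hq
    subst hxy
    simp only [Finset.mem_sigma, Nat.mem_divisorsAntidiagonal, mem_Ico]
    have h1 : x * (a + b) = a * x + b * x := by ring
    have h2 : 1 ≤ a * x := Nat.mul_le_mul ha hx
    constructor
    · constructor
      · omega
      · omega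
    · omega
  · rintro ⟨⟨d, m⟩, a⟩ ht
    simp only [Finset.mem_sigma, Nat.mem_divisorsAntidiagonal, mem_Ico] at ht
    have : a + (m - a) = m := by omega
    dsimp only
    rw [this]
  · rintro ⟨⟨a, x⟩, b, y⟩ hq
    simp only [mem_filter, mem_Qd] at hq
    have e : ((a, x), (a + b - a, x)) = ((a, x), b, y) := by
      simp only [Prod.mk.injEq, true_and, and_true]; omega
    exact e
  · rintro ⟨⟨d, m⟩, a⟩ ht
    rfl

/-- diagonal `a = b`. -/
lemma sum_diagA {n : ℕ} (w : ℕ → ℕ → ℚ) :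
    ∑ q ∈ (Qd n).filter (fun q => q.1.1 = q.2.1), w q.1.1 q.2.1 =
      ∑ p ∈ n.divisorsAntidiagonal, ∑ x ∈ Ico 1 p.2, w p.1 p.1 := by
  rw [Finset.sum_sigma' n.divisorsAntidiagonal (fun p => Ico 1 p.2) (fun p _ => w p.1 p.1)]
  refine (Finset.sum_bij'
    (i := fun (t : (_ : ℕ × ℕ) × ℕ) _ => ((t.1.1, t.2), (t.1.1, t.1.2 - t.2)))
    (j := fun q _ => (⟨(q.1.1, q.1.2 + q.2.2), q.1.2⟩ : (_ : ℕ × ℕ) × ℕ))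
    ?_ ?_ ?_ ?_ ?_).symm
  · rintro ⟨⟨d, m⟩, t⟩ ht
    simp only [Finset.mem_sigma, Nat.mem_divisorsAntidiagonal, mem_Ico] at ht
    obtain ⟨⟨hdm, hn⟩, ht1, htm⟩ := ht
    have hd : 1 ≤ d := by
      rcases Nat.eq_zero_or_pos d with h | h
      · subst h; simp at hdm; omega
      · exact h
    have h1 := Nat.mul_sub d m t
    have h2 : d * t ≤ d * m := Nat.mul_le_mul_left d htm.le
    simp only [mem_filter, mem_Qd]
    exact ⟨⟨hd, ht1, hd, by omega, by omega⟩, trivial⟩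
  · rintro ⟨⟨a, x⟩, b, y⟩ hq
    simp only [mem_filter, mem_Qd] at hq
    obtain ⟨⟨ha, hx, hb, hy, he⟩, hab⟩ := hq
    subst hab
    simp only [Finset.mem_sigma, Nat.mem_divisorsAntidiagonal, mem_Ico]
    have h1 : a * (x + y) = a * x + a * y := by ring
    have h2 : 1 ≤ a * x := Nat.mul_le_mul ha hx
    constructor
    · constructor
      · omega
      · omega
    · omega
  · rintro ⟨⟨d, m⟩, t⟩ ht
    simp only [Finset.mem_sigma, Nat.mem_divisorsAntidiagonal, mem_Ico] at ht
    have : t + (m - t) = m := by omega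
    dsimp only
    rw [this]
  · rintro ⟨⟨a, x⟩, b, y⟩ hq
    simp only [mem_filter, mem_Qd] at hq
    have e : ((a, x), (a, x + y - x)) = ((a, x), b, y) := by
      simp only [Prod.mk.injEq, true_and, and_true]; omega
    exact e
  · rintro ⟨⟨d, m⟩, t⟩ ht
    rfl

lemma sum_Ico_id (m : ℕ) :
    ∑ a ∈ Ico 1 m, (a : ℚ) = ((m : ℚ) ^ 2 - m) / 2 := by
  induction m with
  | zero => simp
  | succ k ih =>
    rcases Nat.eq_zero_or_pos k with h | h
    · subst h; norm_num
    · rw [Finset.sum_Ico_succ_top (by omega), ih]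
      push_cast
      ring

lemma sum_Ico_sq (m : ℕ) :
    ∑ a ∈ Ico 1 m, (a : ℚ) ^ 2 = (2 * (m : ℚ) ^ 3 - 3 * (m : ℚ) ^ 2 + m) / 6 := by
  induction m with
  | zero => simp
  | succ k ih =>
    rcases Nat.eq_zero_or_pos k with h | h
    · subst h; norm_num
    · rw [Finset.sum_Ico_succ_top (by omega), ih]
      push_cast
      ring

lemma Qd_eq_biUnion {n : ℕ} :
    Qd n = (Ico 1 n).biUnion
      (fun i => (Nat.divisorsAntidiagonal i) ×ˢ (Nat.divisorsAntidiagonal (n - i))) := by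
  ext ⟨⟨a, x⟩, b, y⟩
  simp only [mem_Qd, Finset.mem_biUnion, mem_Ico, Finset.mem_product,
    Nat.mem_divisorsAntidiagonal]
  constructor
  · rintro ⟨ha, hx, hb, hy, he⟩
    have h2 : 1 ≤ a * x := Nat.mul_le_mul ha hx
    have h3 : 1 ≤ b * y := Nat.mul_le_mul hb hy
    exact ⟨a * x, ⟨by omega, by omega⟩, ⟨rfl, by omega⟩, by omega, by omega⟩
  · rintro ⟨i, ⟨hi1, hi2⟩, ⟨he1, hne1⟩, he2, hne2⟩
    have hax : a * x ≠ 0 := by omega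
    have hby : b * y ≠ 0 := by omega
    obtain ⟨ha, hx⟩ := Nat.mul_ne_zero_iff.mp hax
    obtain ⟨hb, hy⟩ := Nat.mul_ne_zero_iff.mp hby
    exact ⟨by omega, by omega, by omega, by omega, by omega⟩

lemma S_eq {n : ℕ} :
    ∑ i ∈ Ico 1 n, (sigma 1 i : ℚ) * (sigma 1 (n - i) : ℚ) =
      ∑ q ∈ Qd n, (q.1.1 : ℚ) * (q.2.1 : ℚ) := by
  rw [Qd_eq_biUnion, Finset.sum_biUnion]
  · refine Finset.sum_congr rfl fun i _ => ?_
    rw [Finset.sum_product, sigma1_cast, sigma1_cast, Finset.sum_mul_sum]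
  · intro i _ j _ hij
    refine Finset.disjoint_left.mpr fun q hqi hqj => hij ?_
    simp only [Finset.mem_product, Nat.mem_divisorsAntidiagonal] at hqi hqj
    omega

end SigmaConvAux

/-- Ramanujan's identity:
`∑_{i=1}^{d-1} σ₁(i) σ₁(d-i) = (1/12 - d/2) σ₁(d) + (5/12) σ₃(d)`. -/
theorem sigma_convolution (d : ℕ) (hd : 0 < d) :
    ∑ i ∈ Finset.Ico 1 d, (sigma 1 i : ℚ) * (sigma 1 (d - i) : ℚ) =
      ((1 : ℚ) / 12 - (d : ℚ) / 2) * (sigma 1 d : ℚ) + (5 : ℚ) / 12 * (sigma 3 d : ℚ) := by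
  -- swap relations
  have swap11 : ∑ q ∈ (Qd d).filter (fun q => q.2.1 < q.1.1), (q.1.1 : ℚ) * (q.2.1 : ℚ) =
      ∑ q ∈ (Qd d).filter (fun q => q.1.1 < q.2.1), (q.1.1 : ℚ) * (q.2.1 : ℚ) := by
    rw [sum_swapQ (fun q => (q.1.1 : ℚ) * (q.2.1 : ℚ))]
    exact Finset.sum_congr rfl fun q _ => by dsimp only; ring
  have swap20 : ∑ q ∈ (Qd d).filter (fun q => q.2.1 < q.1.1), (q.1.1 : ℚ) ^ 2 =
      ∑ q ∈ (Qd d).filter (fun q => q.1.1 < q.2.1), (q.2.1 : ℚ) ^ 2 :=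
    sum_swapQ (fun q => (q.1.1 : ℚ) ^ 2)
  have swap02 : ∑ q ∈ (Qd d).filter (fun q => q.2.1 < q.1.1), (q.2.1 : ℚ) ^ 2 =
      ∑ q ∈ (Qd d).filter (fun q => q.1.1 < q.2.1), (q.1.1 : ℚ) ^ 2 :=
    sum_swapQ (fun q => (q.2.1 : ℚ) ^ 2)
  -- diagonal a = b
  have diagA11 : ∑ q ∈ (Qd d).filter (fun q => q.1.1 = q.2.1), (q.1.1 : ℚ) * (q.2.1 : ℚ) =
      ∑ p ∈ d.divisorsAntidiagonal, ∑ _x ∈ Ico 1 p.2, (p.1 : ℚ) * (p.1 : ℚ) :=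
    sum_diagA (fun a b => (a : ℚ) * (b : ℚ))
  have diagA20 : ∑ q ∈ (Qd d).filter (fun q => q.1.1 = q.2.1), (q.1.1 : ℚ) ^ 2 =
      ∑ p ∈ d.divisorsAntidiagonal, ∑ _x ∈ Ico 1 p.2, (p.1 : ℚ) * (p.1 : ℚ) := by
    have := sum_diagA (n := d) (fun a _ => (a : ℚ) ^ 2)
    rw [this]
    exact Finset.sum_congr rfl fun p _ => Finset.sum_congr rfl fun x _ => by ring
  -- diagonal x = y
  have diagX11 : ∑ q ∈ (Qd d).filter (fun q => q.1.2 = q.2.2), (q.1.1 : ℚ) * (q.2.1 : ℚ) =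
      ∑ p ∈ d.divisorsAntidiagonal, ∑ a ∈ Ico 1 p.2, (a : ℚ) * ((p.2 - a : ℕ) : ℚ) :=
    sum_diagX (fun a b => (a : ℚ) * (b : ℚ))
  have diagX20 : ∑ q ∈ (Qd d).filter (fun q => q.1.2 = q.2.2), (q.1.1 : ℚ) ^ 2 =
      ∑ p ∈ d.divisorsAntidiagonal, ∑ a ∈ Ico 1 p.2, (a : ℚ) ^ 2 :=
    sum_diagX (fun a _ => (a : ℚ) ^ 2)
  -- off-diagonal x-regions expressed over the a<b region
  have ltX11 : ∑ q ∈ (Qd d).filter (fun q => q.2.2 < q.1.2), (q.1.1 : ℚ) * (q.2.1 : ℚ) =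
      (∑ q ∈ (Qd d).filter (fun q => q.1.1 < q.2.1), (q.1.1 : ℚ) * (q.2.1 : ℚ)) -
      ∑ q ∈ (Qd d).filter (fun q => q.1.1 < q.2.1), (q.1.1 : ℚ) ^ 2 := by
    rw [sum_ltX (fun q => (q.1.1 : ℚ) * (q.2.1 : ℚ)), ← Finset.sum_sub_distrib]
    refine Finset.sum_congr rfl fun q hq => ?_
    rw [mem_filter] at hq
    have hc : ((q.2.1 - q.1.1 : ℕ) : ℚ) = (q.2.1 : ℚ) - q.1.1 := by
      rw [Nat.cast_sub hq.2.le]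
    dsimp only
    rw [hc]; ring
  have ltX20 : ∑ q ∈ (Qd d).filter (fun q => q.2.2 < q.1.2), (q.1.1 : ℚ) ^ 2 =
      ∑ q ∈ (Qd d).filter (fun q => q.1.1 < q.2.1), (q.1.1 : ℚ) ^ 2 :=
    sum_ltX (fun q => (q.1.1 : ℚ) ^ 2)
  have ltY11 : ∑ q ∈ (Qd d).filter (fun q => q.1.2 < q.2.2), (q.1.1 : ℚ) * (q.2.1 : ℚ) =
      (∑ q ∈ (Qd d).filter (fun q => q.2.1 < q.1.1), (q.1.1 : ℚ) * (q.2.1 : ℚ)) -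
      ∑ q ∈ (Qd d).filter (fun q => q.2.1 < q.1.1), (q.2.1 : ℚ) ^ 2 := by
    rw [sum_ltY (fun q => (q.1.1 : ℚ) * (q.2.1 : ℚ)), ← Finset.sum_sub_distrib]
    refine Finset.sum_congr rfl fun q hq => ?_
    rw [mem_filter] at hq
    have hc : ((q.1.1 - q.2.1 : ℕ) : ℚ) = (q.1.1 : ℚ) - q.2.1 := by
      rw [Nat.cast_sub hq.2.le]
    dsimp only
    rw [hc]; ring
  have ltY20 : ∑ q ∈ (Qd d).filter (fun q => q.1.2 < q.2.2), (q.1.1 : ℚ) ^ 2 =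
      ((∑ q ∈ (Qd d).filter (fun q => q.2.1 < q.1.1), (q.1.1 : ℚ) ^ 2) -
      2 * ∑ q ∈ (Qd d).filter (fun q => q.2.1 < q.1.1), (q.1.1 : ℚ) * (q.2.1 : ℚ)) +
      ∑ q ∈ (Qd d).filter (fun q => q.2.1 < q.1.1), (q.2.1 : ℚ) ^ 2 := by
    rw [sum_ltY (fun q => (q.1.1 : ℚ) ^ 2), Finset.mul_sum, ← Finset.sum_sub_distrib,
      ← Finset.sum_add_distrib]
    refine Finset.sum_congr rfl fun q hq => ?_
    rw [mem_filter] at hq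
    have hc : ((q.1.1 - q.2.1 : ℕ) : ℚ) = (q.1.1 : ℚ) - q.2.1 := by
      rw [Nat.cast_sub hq.2.le]
    dsimp only
    rw [hc]; ring
  -- trichotomies
  have tri1A : ∑ q ∈ Qd d, (q.1.1 : ℚ) * (q.2.1 : ℚ) =
      (∑ q ∈ (Qd d).filter (fun q => q.2.1 < q.1.1), (q.1.1 : ℚ) * (q.2.1 : ℚ)) +
      (∑ q ∈ (Qd d).filter (fun q => q.1.1 = q.2.1), (q.1.1 : ℚ) * (q.2.1 : ℚ)) +
      ∑ q ∈ (Qd d).filter (fun q => q.1.1 < q.2.1), (q.1.1 : ℚ) * (q.2.1 : ℚ) :=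
    sum_tri (Qd d) (fun q => q.1.1) (fun q => q.2.1) _
  have tri1X : ∑ q ∈ Qd d, (q.1.1 : ℚ) * (q.2.1 : ℚ) =
      (∑ q ∈ (Qd d).filter (fun q => q.2.2 < q.1.2), (q.1.1 : ℚ) * (q.2.1 : ℚ)) +
      (∑ q ∈ (Qd d).filter (fun q => q.1.2 = q.2.2), (q.1.1 : ℚ) * (q.2.1 : ℚ)) +
      ∑ q ∈ (Qd d).filter (fun q => q.1.2 < q.2.2), (q.1.1 : ℚ) * (q.2.1 : ℚ) :=
    sum_tri (Qd d) (fun q => q.1.2) (fun q => q.2.2) _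
  have tri2A : ∑ q ∈ Qd d, (q.1.1 : ℚ) ^ 2 =
      (∑ q ∈ (Qd d).filter (fun q => q.2.1 < q.1.1), (q.1.1 : ℚ) ^ 2) +
      (∑ q ∈ (Qd d).filter (fun q => q.1.1 = q.2.1), (q.1.1 : ℚ) ^ 2) +
      ∑ q ∈ (Qd d).filter (fun q => q.1.1 < q.2.1), (q.1.1 : ℚ) ^ 2 :=
    sum_tri (Qd d) (fun q => q.1.1) (fun q => q.2.1) _
  have tri2X : ∑ q ∈ Qd d, (q.1.1 : ℚ) ^ 2 =
      (∑ q ∈ (Qd d).filter (fun q => q.2.2 < q.1.2), (q.1.1 : ℚ) ^ 2) +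
      (∑ q ∈ (Qd d).filter (fun q => q.1.2 = q.2.2), (q.1.1 : ℚ) ^ 2) +
      ∑ q ∈ (Qd d).filter (fun q => q.1.2 < q.2.2), (q.1.1 : ℚ) ^ 2 :=
    sum_tri (Qd d) (fun q => q.1.2) (fun q => q.2.2) _
  -- evaluations of diagonal divisor sums
  have hE20 : ∑ p ∈ d.divisorsAntidiagonal, ∑ a ∈ Ico 1 p.2, (a : ℚ) ^ 2 =
      (2 * (∑ e ∈ d.divisors, (e : ℚ) ^ 3) - 3 * (∑ e ∈ d.divisors, (e : ℚ) ^ 2) +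
        ∑ e ∈ d.divisors, (e : ℚ)) / 6 := by
    have h1 : ∀ p ∈ d.divisorsAntidiagonal, (∑ a ∈ Ico 1 p.2, (a : ℚ) ^ 2) =
        (2 * (p.2 : ℚ) ^ 3 - 3 * (p.2 : ℚ) ^ 2 + p.2) / 6 := fun p _ => sum_Ico_sq p.2
    rw [Finset.sum_congr rfl h1,
      Nat.sum_divisorsAntidiagonal (fun _ e => (2 * (e : ℚ) ^ 3 - 3 * (e : ℚ) ^ 2 + e) / 6),
      Nat.sum_div_divisors d (fun e => (2 * (e : ℚ) ^ 3 - 3 * (e : ℚ) ^ 2 + e) / 6)]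
    rw [← Finset.sum_div]
    congr 1
    rw [Finset.sum_add_distrib, Finset.sum_sub_distrib, ← Finset.mul_sum, ← Finset.mul_sum]
  have hE11 : ∑ p ∈ d.divisorsAntidiagonal, ∑ a ∈ Ico 1 p.2, (a : ℚ) * ((p.2 - a : ℕ) : ℚ) =
      ((∑ e ∈ d.divisors, (e : ℚ) ^ 3) - ∑ e ∈ d.divisors, (e : ℚ)) / 6 := by
    have inner : ∀ m : ℕ, (∑ a ∈ Ico 1 m, (a : ℚ) * ((m - a : ℕ) : ℚ)) =
        ((m : ℚ) ^ 3 - m) / 6 := by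
      intro m
      have h2 : ∀ a ∈ Ico 1 m, (a : ℚ) * ((m - a : ℕ) : ℚ) = (m : ℚ) * a - (a : ℚ) ^ 2 := by
        intro a ha
        rw [mem_Ico] at ha
        rw [Nat.cast_sub ha.2.le]
        ring
      rw [Finset.sum_congr rfl h2, Finset.sum_sub_distrib, ← Finset.mul_sum, sum_Ico_id,
        sum_Ico_sq]
      ring
    have h1 : ∀ p ∈ d.divisorsAntidiagonal, (∑ a ∈ Ico 1 p.2, (a : ℚ) * ((p.2 - a : ℕ) : ℚ)) =
        ((p.2 : ℚ) ^ 3 - p.2) / 6 := fun p _ => inner p.2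
    rw [Finset.sum_congr rfl h1,
      Nat.sum_divisorsAntidiagonal (fun _ e => ((e : ℚ) ^ 3 - e) / 6),
      Nat.sum_div_divisors d (fun e => ((e : ℚ) ^ 3 - e) / 6)]
    rw [← Finset.sum_div]
    congr 1
    rw [Finset.sum_sub_distrib]
  have hD2 : ∑ p ∈ d.divisorsAntidiagonal, ∑ _x ∈ Ico 1 p.2, (p.1 : ℚ) * (p.1 : ℚ) =
      (d : ℚ) * (∑ e ∈ d.divisors, (e : ℚ)) - ∑ e ∈ d.divisors, (e : ℚ) ^ 2 := by
    have h1 : ∀ p ∈ d.divisorsAntidiagonal, (∑ _x ∈ Ico 1 p.2, (p.1 : ℚ) * (p.1 : ℚ)) =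
        (d : ℚ) * (p.1 : ℚ) - (p.1 : ℚ) ^ 2 := by
      intro p hp
      rw [Nat.mem_divisorsAntidiagonal] at hp
      have hp2 : 1 ≤ p.2 := by
        rcases Nat.eq_zero_or_pos p.2 with h | h
        · exfalso; apply hp.2; rw [← hp.1, h, Nat.mul_zero]
        · exact h
      have hcast : (p.1 : ℚ) * (p.2 : ℚ) = (d : ℚ) := by exact_mod_cast hp.1
      rw [Finset.sum_const, Nat.card_Ico, nsmul_eq_mul, Nat.cast_sub hp2]
      push_cast
      linear_combination (p.1 : ℚ) * hcast
    rw [Finset.sum_congr rfl h1,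
      Nat.sum_divisorsAntidiagonal (fun e _ => (d : ℚ) * (e : ℚ) - (e : ℚ) ^ 2),
      Finset.sum_sub_distrib, ← Finset.mul_sum]
  -- put everything together
  have key : ∑ q ∈ Qd d, (q.1.1 : ℚ) * (q.2.1 : ℚ) =
      (2 * (∑ e ∈ d.divisors, (e : ℚ) ^ 3) - 3 * (∑ e ∈ d.divisors, (e : ℚ) ^ 2) +
        ∑ e ∈ d.divisors, (e : ℚ)) / 6 +
      ((((∑ e ∈ d.divisors, (e : ℚ) ^ 3) - ∑ e ∈ d.divisors, (e : ℚ)) / 6) -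
        ((d : ℚ) * (∑ e ∈ d.divisors, (e : ℚ)) - ∑ e ∈ d.divisors, (e : ℚ) ^ 2)) / 2 := by
    linarith [swap11, swap20, swap02, diagA11, diagA20, diagX11, diagX20, ltX11, ltX20,
      ltY11, ltY20, tri1A, tri1X, tri2A, tri2X, hE20, hE11, hD2]
  rw [S_eq, key, sigma_cast 1 d, sigma_cast 3 d]
  simp only [pow_one]
  ring
end

section
/- Let a, b : ℕ → ℚ be functions such that for every positive integer d, a(d) = ∑_{e∣d} b(e) and ∑_{e∣d} b(e)·σ₁(d/e) = 5·(σ₃(d) − d·σ₁(d)), where the sums range over the positive divisors e of d. Then for every positive integer d, a(d) = 5d·( ∑_{e∣d} (σ₃(e)/e)·μ(d/e) − d ). -/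
/-! In terms of Dirichlet convolution the hypotheses say `a = b * ζ` and `b * σ₁ = c`, where
`c(n) = 5 (σ₃(n) - n σ₁(n))`. As `σ₁ = ζ * id` and `n ↦ μ(n) n` is the Dirichlet inverse of `id`
(pointwise multiplication by the completely multiplicative `id` is a ring endomorphism), we get
`a = c * (μ · id)`. Expanding `c` and using `σ₁ * μ = id` yields the formula. -/

open ArithmeticFunction

/-- σ_k(d): the sum of the k-th powers of the positive divisors of d. -/
def sigma' (k d : ℕ) : ℕ := ∑ e ∈ d.divisors, e ^ k

open Finset
open scoped ArithmeticFunction.zeta ArithmeticFunction.Moebius ArithmeticFunction.sigma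

namespace ArithmeticFunction

variable {R : Type*}

theorem pmul_mul_pmul_of_map_mul [CommSemiring R] {h : ArithmeticFunction R}
    (hh : ∀ m n, h (m * n) = h m * h n) (f g : ArithmeticFunction R) :
    pmul f h * pmul g h = pmul (f * g) h := by
  ext n
  simp only [mul_apply, pmul_apply, sum_mul]
  refine sum_congr rfl fun x hx => ?_
  rw [← (Nat.mem_divisorsAntidiagonal.1 hx).1, hh]
  ring

theorem one_pmul_of_apply_one [MulZeroOneClass R] {h : ArithmeticFunction R} (h1 : h 1 = 1) :
    pmul 1 h = 1 := by
  ext n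
  by_cases hn : n = 1 <;> simp [one_apply, hn, h1]

theorem coe_id_mul_pmul_moebius [CommRing R] :
    (ArithmeticFunction.id : ArithmeticFunction R) *
      pmul (μ : ArithmeticFunction R) (ArithmeticFunction.id : ArithmeticFunction R) = 1 := by
  have hid : ∀ m n, (ArithmeticFunction.id : ArithmeticFunction R) (m * n) =
      ArithmeticFunction.id m * ArithmeticFunction.id n := by simp
  nth_rw 1 [← zeta_pmul (ArithmeticFunction.id : ArithmeticFunction R)]
  rw [pmul_mul_pmul_of_map_mul hid, coe_zeta_mul_coe_moebius, one_pmul_of_apply_one (by simp)]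

theorem mul_zeta_eq_mul_pmul_moebius_of_mul_sigma_one [CommRing R]
    {B C : ArithmeticFunction R} (h : B * σ 1 = C) :
    B * ζ =
      C * pmul (μ : ArithmeticFunction R) (ArithmeticFunction.id : ArithmeticFunction R) := by
  rw [← h, ← zeta_mul_pow_eq_sigma, pow_one_eq_id, natCoe_mul, ← mul_assoc,
    mul_assoc _ _ (pmul _ _), coe_id_mul_pmul_moebius, mul_one]

theorem sum_sigma_one_mul_moebius [CommRing R] {n : ℕ} (hn : 0 < n) :
    ∑ e ∈ n.divisors, (σ 1 e : R) * μ (n / e) = n := by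
  have hsigma : ∀ m > 0, ∑ i ∈ m.divisors, ((i : ℕ) : R) = σ 1 m := fun m _ => by
    rw [sigma_one_apply]; push_cast; rfl
  rw [← sum_eq_iff_sum_mul_moebius_eq.1 hsigma n hn,
    Nat.sum_divisorsAntidiagonal' (fun i j => (μ i : R) * σ 1 j)]
  exact sum_congr rfl fun _ _ => mul_comm _ _

end ArithmeticFunction

theorem toArithmeticFunction_apply_of_pos {R : Type*} [Zero R] (f : ℕ → R) {n : ℕ}
    (hn : 0 < n) : toArithmeticFunction f n = f n :=
  if_neg hn.ne'

theorem toArithmeticFunction_mul_apply {R : Type*} [Semiring R] (f : ℕ → R)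
    (g : ArithmeticFunction R) (n : ℕ) :
    (toArithmeticFunction f * g) n = ∑ e ∈ n.divisors, f e * g (n / e) := by
  rw [mul_apply, Nat.sum_divisorsAntidiagonal (fun i j => toArithmeticFunction f i * g j)]
  refine sum_congr rfl fun e he => ?_
  simp [toArithmeticFunction, Nat.ne_of_gt (Nat.pos_of_mem_divisors he)]

theorem sum_divisors_eq_sum_mul_moebius_of_sum_mul_sigma_one {R : Type*} [CommRing R]
    {b c : ℕ → R} (h : ∀ n, 0 < n → ∑ e ∈ n.divisors, b e * σ 1 (n / e) = c n)
    (n : ℕ) :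
    ∑ e ∈ n.divisors, b e = ∑ e ∈ n.divisors, c e * μ (n / e) * (n / e : ℕ) := by
  have hconv : toArithmeticFunction b * σ 1 = toArithmeticFunction c := by
    ext m
    rcases Nat.eq_zero_or_pos m with rfl | hm
    · simp
    rw [toArithmeticFunction_mul_apply, toArithmeticFunction_apply_of_pos c hm, ← h m hm]
    simp only [natCoe_apply]
  have := congrArg (· n) (mul_zeta_eq_mul_pmul_moebius_of_mul_sigma_one hconv)
  simp only [coe_mul_zeta_apply, toArithmeticFunction_mul_apply] at this
  rw [sum_congr rfl fun e he =>
    (toArithmeticFunction_apply_of_pos b (Nat.pos_of_mem_divisors he)).symm, this]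
  refine sum_congr rfl fun e _ => ?_
  rw [pmul_apply, intCoe_apply, natCoe_apply, id_apply, mul_assoc]

theorem sigma'_eq_sigma (k d : ℕ) : sigma' k d = σ k d := sigma_apply.symm

/-- If `a(d) = ∑_{e ∣ d} b(e)` and `∑_{e ∣ d} b(e) σ₁(d/e) = 5 (σ₃(d) - d σ₁(d))` for
all positive `d`, then `a(d) = 5d (∑_{e ∣ d} (σ₃(e)/e) μ(d/e) - d)` for all positive `d`. -/
theorem enum_theorem (a b : ℕ → ℚ)
    (hab : ∀ d : ℕ, 0 < d → a d = ∑ e ∈ d.divisors, b e)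
    (hb : ∀ d : ℕ, 0 < d →
      ∑ e ∈ d.divisors, b e * (sigma' 1 (d / e) : ℚ) =
        5 * ((sigma' 3 d : ℚ) - (d : ℚ) * (sigma' 1 d : ℚ))) :
    ∀ d : ℕ, 0 < d →
      a d = 5 * (d : ℚ) *
        ((∑ e ∈ d.divisors,
          (sigma' 3 e : ℚ) / (e : ℚ) * (ArithmeticFunction.moebius (d / e) : ℚ)) - (d : ℚ)) := by
  simp only [sigma'_eq_sigma] at hb ⊢
  intro d hd
  have hterm : ∀ e ∈ d.divisors,
      5 * ((σ 3 e : ℚ) - e * σ 1 e) * μ (d / e) * (d / e : ℕ) =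
        5 * d * ((σ 3 e : ℚ) / e * μ (d / e)) - 5 * d * ((σ 1 e : ℚ) * μ (d / e)) := by
    intro e he
    have he0 : (e : ℚ) ≠ 0 := Nat.cast_ne_zero.2 (Nat.pos_of_mem_divisors he).ne'
    rw [Nat.cast_div (Nat.dvd_of_mem_divisors he) he0]
    field_simp
  rw [hab d hd, sum_divisors_eq_sum_mul_moebius_of_sum_mul_sigma_one hb, sum_congr rfl hterm,
    sum_sub_distrib, ← mul_sum, ← mul_sum, sum_sigma_one_mul_moebius hd]
  ring
end

section
/- Let P, Q ∈ ℚ⟦q⟧ be the formal power series with constant term 1 whose coefficient of q^k for k ≥ 1 is −24·σ₁(k) for P and 240·σ₃(k) for Q. Then the Ramanujan differential equation q·P′ = (P² − Q)/12 holds in ℚ⟦q⟧, where P′ denotes the formal derivative of P. -/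
open PowerSeries

/-- The Eisenstein series `P = E₂`: constant term 1, coefficient of `q^k` equal to
`-24 σ₁(k)` for `k ≥ 1`. -/
noncomputable def Pseries : PowerSeries ℚ :=
  PowerSeries.mk fun k => if k = 0 then 1 else -24 * (sigma 1 k : ℚ)

/-- The Eisenstein series `Q = E₄`: constant term 1, coefficient of `q^k` equal to
`240 σ₃(k)` for `k ≥ 1`. -/
noncomputable def Qseries : PowerSeries ℚ :=
  PowerSeries.mk fun k => if k = 0 then 1 else 240 * (sigma 3 k : ℚ)

open Finset

theorem sum_eq_two_nsmul_sum_filter_lt_add_sum_filter_eq {α β M : Type*} [LinearOrder β]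
    [AddCommMonoid M] {s : Finset (α × α)} (hs : ∀ p ∈ s, p.swap ∈ s) (k : α → β)
    {F : α × α → M} (hF : ∀ p, F p.swap = F p) :
    ∑ p ∈ s, F p = 2 • ∑ p ∈ s with k p.2 < k p.1, F p + ∑ p ∈ s with k p.1 = k p.2, F p := by
  have hswap : ∑ p ∈ s with k p.1 < k p.2, F p = ∑ p ∈ s with k p.2 < k p.1, F p :=
    sum_nbij' Prod.swap Prod.swap (by simp_all) (by simp_all) (by simp) (by simp)
      fun p _ => (hF p).symm
  rw [← sum_filter_add_sum_filter_not s (fun p => k p.2 < k p.1),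
    ← sum_filter_add_sum_filter_not (s.filter fun p => ¬ k p.2 < k p.1) (fun p => k p.1 < k p.2),
    filter_filter, filter_filter, two_nsmul, add_assoc]
  congr 2
  · rw [← hswap]
    exact sum_congr (filter_congr fun p _ => ⟨And.right, fun h => ⟨lt_asymm h, h⟩⟩) fun _ _ => rfl
  · exact sum_congr (filter_congr fun p _ => by rw [not_lt, not_lt, le_antisymm_iff])
      fun _ _ => rfl

def twoProductReprs (n : ℕ) : Finset ((ℕ × ℕ) × (ℕ × ℕ)) :=
  (antidiagonal n).biUnion fun m => m.1.divisorsAntidiagonal ×ˢ m.2.divisorsAntidiagonal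

theorem mem_twoProductReprs {n a x b y : ℕ} :
    ((a, x), (b, y)) ∈ twoProductReprs n ↔
      a * x + b * y = n ∧ 0 < a ∧ 0 < x ∧ 0 < b ∧ 0 < y := by
  simp [twoProductReprs, Nat.pos_iff_ne_zero, and_assoc]

theorem swap_mem_twoProductReprs {n : ℕ} {p : (ℕ × ℕ) × (ℕ × ℕ)} (hp : p ∈ twoProductReprs n) :
    p.swap ∈ twoProductReprs n := by
  obtain ⟨⟨a, x⟩, b, y⟩ := p
  rw [mem_twoProductReprs] at hp
  exact mem_twoProductReprs.2 ⟨by omega, by omega⟩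

theorem sum_twoProductReprs_mul {R : Type*} [CommSemiring R] (n : ℕ) (f g : ℕ → R) :
    ∑ p ∈ twoProductReprs n, f p.1.1 * g p.2.1
      = ∑ m ∈ antidiagonal n, (∑ d ∈ m.1.divisors, f d) * ∑ d ∈ m.2.divisors, g d := by
  rw [twoProductReprs, sum_biUnion]
  · refine sum_congr rfl fun m _ => ?_
    rw [sum_product, ← Nat.sum_divisorsAntidiagonal (fun d _ => f d),
      ← Nat.sum_divisorsAntidiagonal (fun d _ => g d), sum_mul_sum]
  · intro m _ m' _ hne
    refine disjoint_left.2 fun p hp hp' => hne ?_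
    simp only [mem_product, Nat.mem_divisorsAntidiagonal] at hp hp'
    exact Prod.ext (hp.1.1.symm.trans hp'.1.1) (hp.2.1.symm.trans hp'.2.1)

theorem sum_twoProductReprs_filter_snd_lt_fst {M : Type*} [AddCommMonoid M] (n : ℕ)
    (f : ℕ → ℕ → M) :
    ∑ p ∈ twoProductReprs n with p.2.1 < p.1.1, f p.1.1 p.2.1
      = ∑ p ∈ twoProductReprs n with p.2.2 < p.1.2, f (p.1.1 + p.2.1) p.1.1 := by
  refine sum_nbij' (fun p => ((p.2.1, p.1.2 + p.2.2), (p.1.1 - p.2.1, p.1.2)))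
    (fun p => ((p.1.1 + p.2.1, p.2.2), (p.1.1, p.1.2 - p.2.2))) ?_ ?_ ?_ ?_ ?_
  · rintro ⟨⟨a, x⟩, b, y⟩ hp
    simp only [mem_filter, mem_twoProductReprs] at hp ⊢
    obtain ⟨⟨he, ha, hx, hb, hy⟩, hba⟩ := hp
    obtain ⟨c, rfl⟩ := Nat.exists_eq_add_of_le hba.le
    refine ⟨⟨?_, hb, by omega, by omega, hx⟩, by omega⟩
    rw [← he, Nat.add_sub_cancel_left]; ring
  · rintro ⟨⟨a, x⟩, b, y⟩ hp
    simp only [mem_filter, mem_twoProductReprs] at hp ⊢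
    obtain ⟨⟨he, ha, hx, hb, hy⟩, hyx⟩ := hp
    obtain ⟨c, rfl⟩ := Nat.exists_eq_add_of_le hyx.le
    refine ⟨⟨?_, by omega, hy, ha, by omega⟩, by omega⟩
    rw [← he, Nat.add_sub_cancel_left]; ring
  · rintro ⟨⟨a, x⟩, b, y⟩ hp
    simp only [mem_filter, mem_twoProductReprs] at hp
    dsimp only
    congr 2 <;> omega
  · rintro ⟨⟨a, x⟩, b, y⟩ hp
    simp only [mem_filter, mem_twoProductReprs] at hp
    dsimp only
    congr 2 <;> omega
  · rintro ⟨⟨a, x⟩, b, y⟩ hp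
    simp only [mem_filter] at hp
    dsimp only
    rw [Nat.add_sub_cancel' hp.2.le]

theorem sum_twoProductReprs_filter_fst_eq {M : Type*} [AddCommMonoid M] (n : ℕ) (g : ℕ → M) :
    ∑ p ∈ twoProductReprs n with p.1.1 = p.2.1, g p.1.1
      = ∑ q ∈ n.divisorsAntidiagonal, (q.2 - 1) • g q.1 := by
  have hconst : ∀ q : ℕ × ℕ, (q.2 - 1) • g q.1 = ∑ _x ∈ Ico 1 q.2, g q.1 := by
    simp [sum_const]
  rw [sum_congr rfl fun q _ => hconst q, sum_sigma']
  refine sum_nbij' (fun p => ⟨(p.1.1, p.1.2 + p.2.2), p.1.2⟩)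
    (fun q => ((q.1.1, q.2), (q.1.1, q.1.2 - q.2))) ?_ ?_ ?_ ?_ ?_
  · rintro ⟨⟨a, x⟩, b, y⟩ hp
    simp only [mem_filter, mem_twoProductReprs] at hp
    obtain ⟨⟨he, ha, hx, hb, hy⟩, rfl⟩ := hp
    simp only [mem_sigma, Nat.mem_divisorsAntidiagonal, mem_Ico]
    exact ⟨⟨by rw [← he, mul_add], by rw [← he]; positivity⟩, hx, by omega⟩
  · rintro ⟨⟨a, s⟩, x⟩ hq
    simp only [mem_sigma, Nat.mem_divisorsAntidiagonal, mem_Ico] at hq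
    obtain ⟨⟨he, hn⟩, hx, hxs⟩ := hq
    simp only [mem_filter, mem_twoProductReprs]
    refine ⟨⟨by rw [← mul_add, Nat.add_sub_cancel' hxs.le, he], ?_, hx, ?_, by omega⟩, trivial⟩ <;>
      exact Nat.pos_of_ne_zero (left_ne_zero_of_mul (he ▸ hn))
  · rintro ⟨⟨a, x⟩, b, y⟩ hp
    simp only [mem_filter] at hp
    simp only [Nat.add_sub_cancel_left, hp.2]
  · rintro ⟨⟨a, s⟩, x⟩ hq
    simp only [mem_sigma, mem_Ico] at hq
    simp only [Nat.add_sub_cancel' hq.2.2.le]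
  · intro _ _
    rfl

theorem sum_twoProductReprs_filter_snd_eq {M : Type*} [AddCommMonoid M] (n : ℕ)
    (f : ℕ → ℕ → M) :
    ∑ p ∈ twoProductReprs n with p.1.2 = p.2.2, f p.1.1 p.2.1
      = ∑ q ∈ n.divisorsAntidiagonal, ∑ a ∈ Ico 1 q.1, f a (q.1 - a) := by
  rw [sum_sigma']
  refine sum_nbij' (fun p => ⟨(p.1.1 + p.2.1, p.1.2), p.1.1⟩)
    (fun q => ((q.2, q.1.2), (q.1.1 - q.2, q.1.2))) ?_ ?_ ?_ ?_ ?_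
  · rintro ⟨⟨a, x⟩, b, y⟩ hp
    simp only [mem_filter, mem_twoProductReprs] at hp
    obtain ⟨⟨he, ha, hx, hb, hy⟩, rfl⟩ := hp
    simp only [mem_sigma, Nat.mem_divisorsAntidiagonal, mem_Ico]
    exact ⟨⟨by rw [← he, add_mul], by rw [← he]; positivity⟩, ha, by omega⟩
  · rintro ⟨⟨s, x⟩, a⟩ hq
    simp only [mem_sigma, Nat.mem_divisorsAntidiagonal, mem_Ico] at hq
    obtain ⟨⟨he, hn⟩, ha, has⟩ := hq
    simp only [mem_filter, mem_twoProductReprs]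
    have hx : 0 < x := Nat.pos_of_ne_zero (right_ne_zero_of_mul (he ▸ hn))
    exact ⟨⟨by rw [← add_mul, Nat.add_sub_cancel' has.le, he], ha, hx, by omega, hx⟩, trivial⟩
  · rintro ⟨⟨a, x⟩, b, y⟩ hp
    simp only [mem_filter] at hp
    simp only [Nat.add_sub_cancel_left, hp.2]
  · rintro ⟨⟨s, x⟩, a⟩ hq
    simp only [mem_sigma, mem_Ico] at hq
    simp only [Nat.add_sub_cancel' hq.2.2.le]
  · rintro ⟨⟨a, x⟩, b, y⟩ _
    simp only [Nat.add_sub_cancel_left]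

theorem two_mul_sum_twoProductReprs_mul (n : ℕ) :
    2 * ∑ p ∈ twoProductReprs n, (p.1.1 * p.2.1 : ℚ)
      = ∑ p ∈ twoProductReprs n with p.1.2 = p.2.2,
          ((p.1.1 : ℚ) ^ 2 + p.1.1 * p.2.1 + (p.2.1 : ℚ) ^ 2)
        - ∑ p ∈ twoProductReprs n with p.1.1 = p.2.1, (p.1.1 : ℚ) ^ 2 := by
  set R := twoProductReprs n
  set g : ℕ → ℕ → ℚ := fun a b => (a : ℚ) ^ 2 - a * b + (b : ℚ) ^ 2 with hg
  have hR : ∀ p ∈ R, p.swap ∈ R := fun p => swap_mem_twoProductReprs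
  have hsplit_fst := sum_eq_two_nsmul_sum_filter_lt_add_sum_filter_eq hR Prod.fst
    (F := fun p => g p.1.1 p.2.1) fun p => by simp only [hg, Prod.fst_swap, Prod.snd_swap]; ring
  have hsplit_snd := sum_eq_two_nsmul_sum_filter_lt_add_sum_filter_eq hR Prod.snd
    (F := fun p => g p.1.1 p.2.1) fun p => by simp only [hg, Prod.fst_swap, Prod.snd_swap]; ring
  have hsplit_mul := sum_eq_two_nsmul_sum_filter_lt_add_sum_filter_eq hR Prod.snd
    (F := fun p => (p.1.1 * p.2.1 : ℚ)) fun p => by simp only [Prod.fst_swap, Prod.snd_swap]; ring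
  have hshear := sum_twoProductReprs_filter_snd_lt_fst n g
  have hexpand : ∑ p ∈ R with p.2.2 < p.1.2, g (p.1.1 + p.2.1) p.1.1
      = ∑ p ∈ R with p.2.2 < p.1.2, g p.1.1 p.2.1
        + 2 * ∑ p ∈ R with p.2.2 < p.1.2, (p.1.1 * p.2.1 : ℚ) := by
    rw [mul_sum, ← sum_add_distrib]
    refine sum_congr rfl fun p _ => ?_
    simp only [hg]; push_cast; ring
  have hdiag_fst : ∑ p ∈ R with p.1.1 = p.2.1, g p.1.1 p.2.1
      = ∑ p ∈ R with p.1.1 = p.2.1, (p.1.1 : ℚ) ^ 2 := by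
    refine sum_congr rfl fun p hp => ?_
    simp only [hg, ← (mem_filter.1 hp).2]; ring
  have hdiag_snd :
      ∑ p ∈ R with p.1.2 = p.2.2, ((p.1.1 : ℚ) ^ 2 + p.1.1 * p.2.1 + (p.2.1 : ℚ) ^ 2)
      = ∑ p ∈ R with p.1.2 = p.2.2, g p.1.1 p.2.1
        + 2 * ∑ p ∈ R with p.1.2 = p.2.2, (p.1.1 * p.2.1 : ℚ) := by
    rw [mul_sum, ← sum_add_distrib]
    refine sum_congr rfl fun p _ => ?_
    simp only [hg]; ring
  simp only [two_nsmul] at hsplit_fst hsplit_snd hsplit_mul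
  linarith

theorem sum_Ico_one_sq_add_mul_add_sq (s : ℕ) :
    ∑ a ∈ Ico 1 s, ((a : ℚ) ^ 2 + a * (s - a : ℕ) + ((s - a : ℕ) : ℚ) ^ 2)
      = s * (s - 1) * (5 * s - 1) / 6 := by
  have hrange (c : ℚ) (t : ℕ) : ∑ a ∈ range t, (c ^ 2 - c * a + (a : ℚ) ^ 2)
      = t * c ^ 2 - c * t * (t - 1) / 2 + t * (t - 1) * (2 * t - 1) / 6 := by
    induction t with
    | zero => simp
    | succ t ih => rw [sum_range_succ, ih]; push_cast; ring
  rcases s.eq_zero_or_pos with rfl | hs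
  · simp
  have hterm : ∀ a ∈ Ico 1 s, (a : ℚ) ^ 2 + a * (s - a : ℕ) + ((s - a : ℕ) : ℚ) ^ 2
      = (s : ℚ) ^ 2 - s * a + (a : ℚ) ^ 2 := fun a ha => by
    rw [Nat.cast_sub (mem_Ico.1 ha).2.le]; ring
  rw [sum_congr rfl hterm, sum_Ico_eq_sub _ hs, sum_range_one, hrange]
  push_cast
  ring

theorem cast_sigma_eq_sum_divisorsAntidiagonal {R : Type*} [CommSemiring R] (k n : ℕ) :
    (sigma k n : R) = ∑ q ∈ n.divisorsAntidiagonal, (q.1 : R) ^ k := by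
  rw [Nat.sum_divisorsAntidiagonal (fun d _ => (d : R) ^ k), sigma]
  push_cast
  rfl

theorem twelve_mul_sum_antidiagonal_sigma_one_mul (n : ℕ) :
    12 * ∑ m ∈ antidiagonal n, (sigma 1 m.1 : ℚ) * sigma 1 m.2
      = 5 * sigma 3 n + sigma 1 n - 6 * n * sigma 1 n := by
  have hconv : ∑ m ∈ antidiagonal n, (sigma 1 m.1 : ℚ) * sigma 1 m.2
      = ∑ p ∈ twoProductReprs n, (p.1.1 * p.2.1 : ℚ) := by
    simp only [sum_twoProductReprs_mul, sigma, pow_one, Nat.cast_sum]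
  rw [hconv, show (12 : ℚ) = 6 * 2 by norm_num, mul_assoc, two_mul_sum_twoProductReprs_mul,
    sum_twoProductReprs_filter_snd_eq n fun a b => (a : ℚ) ^ 2 + a * b + (b : ℚ) ^ 2,
    sum_twoProductReprs_filter_fst_eq n fun a => (a : ℚ) ^ 2]
  simp only [sum_Ico_one_sq_add_mul_add_sq, cast_sigma_eq_sum_divisorsAntidiagonal, mul_sum,
    ← sum_sub_distrib, ← sum_add_distrib]
  refine sum_congr rfl fun q hq => ?_
  obtain ⟨he, hn⟩ := Nat.mem_divisorsAntidiagonal.1 hq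
  have hq2 : 1 ≤ q.2 := Nat.pos_of_ne_zero (right_ne_zero_of_mul (he ▸ hn))
  rw [nsmul_eq_mul, Nat.cast_sub hq2, ← he]
  push_cast
  ring

noncomputable def sigmaSeries (k : ℕ) : ℚ⟦X⟧ := PowerSeries.mk fun n => (sigma k n : ℚ)

theorem sigma_zero_right (k : ℕ) : sigma k 0 = 0 := by simp [sigma]

theorem Pseries_eq : Pseries = 1 - 24 * sigmaSeries 1 := by
  ext n
  rw [← map_ofNat (C (R := ℚ)) 24, map_sub, coeff_C_mul, coeff_one, Pseries, sigmaSeries,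
    coeff_mk, coeff_mk]
  split_ifs with hn <;> simp [hn, sigma_zero_right]

theorem Qseries_eq : Qseries = 1 + 240 * sigmaSeries 3 := by
  ext n
  rw [← map_ofNat (C (R := ℚ)) 240, map_add, coeff_C_mul, coeff_one, Qseries, sigmaSeries,
    coeff_mk, coeff_mk]
  split_ifs with hn <;> simp [hn, sigma_zero_right]

theorem coeff_X_mul_derivative {R : Type*} [CommSemiring R] (f : R⟦X⟧) (n : ℕ) :
    coeff n (X * d⁄dX R f) = n * coeff n f := by
  cases n with
  | zero => simp
  | succ n => rw [coeff_succ_X_mul, coeff_derivative, mul_comm]; push_cast; rfl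

theorem twelve_mul_sigmaSeries_one_sq :
    12 * sigmaSeries 1 ^ 2
      = 5 * sigmaSeries 3 + sigmaSeries 1 - 6 * X * d⁄dX ℚ (sigmaSeries 1) := by
  ext n
  simp only [← map_ofNat (C (R := ℚ)), mul_assoc, coeff_C_mul, map_add, map_sub,
    coeff_X_mul_derivative]
  rw [sq, coeff_mul]
  simp only [sigmaSeries, coeff_mk]
  rw [twelve_mul_sum_antidiagonal_sigma_one_mul]
  ring

/-- The Ramanujan differential equation `q P' = (P² - Q)/12` in `ℚ⟦q⟧`. -/
theorem ramanujan_differential_equation :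
    PowerSeries.X * (d⁄dX ℚ Pseries) = (Pseries ^ 2 - Qseries) * (12 : ℚ⟦X⟧)⁻¹ := by
  have h12 : constantCoeff (12 : ℚ⟦X⟧) ≠ 0 := by rw [map_ofNat]; norm_num
  rw [eq_mul_inv_iff_mul_eq h12, Pseries_eq, Qseries_eq]
  have hderiv : d⁄dX ℚ (1 - 24 * sigmaSeries 1) = -24 * d⁄dX ℚ (sigmaSeries 1) := by
    rw [← map_ofNat (C (R := ℚ)) 24]
    simp
  rw [hderiv]
  linear_combination (-48) * twelve_mul_sigmaSeries_one_sq
end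

section
/- Let n ≥ 1 and a ≥ 1 be integers, and let I be the ideal of the polynomial ring ℂ[t₁, …, tₙ] generated by the elements t₁^a − t_i^a for 2 ≤ i ≤ n together with the product t₁·t₂⋯tₙ. Then the quotient ring ℂ[t₁, …, tₙ]/I is a finite-dimensional ℂ-vector space of dimension n·a^{n−1}. -/
/-!
Modulo `I`, every `t_i ^ a` with `i ≠ 1` may be replaced by `t₁ ^ a`, so every monomial equals one
of the form `t₁ ^ e * ∏_{i ≥ 2} t_i ^ r_i` with `r_i < a`. If `k` of the `r_i` vanish and
`e > a * k`, trading `t₁ ^ (a * k)` back for those `t_i ^ a` yields a multiple of `t₁ ⋯ tₙ`, so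
the monomials with `e ≤ a * k` span the quotient; there are `∑_r (a * k(r) + 1) = n * a ^ (n - 1)`
of them. They are linearly independent: the normal form map, sending a monomial to `0` in the
first case and to its reduced form otherwise, is linear, commutes with multiplication by monomials
and kills the generators, hence kills `I`.
-/

open MvPolynomial Finset

theorem Nat.ceilDiv_eq_div_add_ite {a : ℕ} (ha : 0 < a) (x : ℕ) :
    x ⌈/⌉ a = x / a + if x % a = 0 then 0 else 1 := by
  rw [Nat.ceilDiv_eq_add_pred_div]
  have := Nat.mod_lt x ha
  have := Nat.div_add_mod x a
  rw [show x + a - 1 = a * (x / a) + (x % a + (a - 1)) by omega, Nat.mul_add_div ha]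
  congr 1
  split_ifs with h
  · exact Nat.div_eq_of_lt (by omega)
  · exact Nat.div_eq_of_lt_le (by omega) (by omega)

theorem Fintype.sum_pi_fin_mul_card_zero_add_one (ι : Type*) [Fintype ι] [DecidableEq ι]
    {a : ℕ} (ha : 0 < a) :
    ∑ r : ι → Fin a, (a * #{i | (r i : ℕ) = 0} + 1) =
      (Fintype.card ι + 1) * a ^ Fintype.card ι := by
  have hfib (i : ι) : #{r : ι → Fin a | (r i : ℕ) = 0} = a ^ (Fintype.card ι - 1) := by
    simpa [Fin.ext_iff] using
      Fintype.card_filter_piFinset_const_eq_of_mem (univ : Finset (Fin a)) i (mem_univ ⟨0, ha⟩)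
  simp only [sum_add_distrib, ← mul_sum, card_filter]
  rw [sum_comm]
  simp only [← card_filter, hfib, sum_const, card_univ, smul_eq_mul, Fintype.card_fun,
    Fintype.card_fin, mul_one]
  rcases Nat.eq_zero_or_pos (Fintype.card ι) with h | h
  · simp [h]
  · rw [mul_left_comm, ← pow_succ', Nat.sub_add_cancel h]
    ring

namespace AdmissibleDeformationRing

variable {σ : Type*} [Fintype σ]

section Exponents

variable [DecidableEq σ] (a : ℕ) (z : σ)

def zDegree (g : σ → ℕ) : ℕ := g z + a * ∑ i : {i // i ≠ z}, g i / a

def reduce (g : σ → ℕ) : σ → ℕ := fun i => if i = z then zDegree a z g else g i % a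

/-- `a * #{i // i ≠ z} < weight a z g` is the condition for `t ^ g` to lie in the ideal; through
`⌈/⌉` it is visibly monotone in `g`, while `lt_weight_iff` recovers the form `a * k < e`. -/
def weight (g : σ → ℕ) : ℕ := g z + a * ∑ i : {i // i ≠ z}, g i ⌈/⌉ a

variable {a z}

lemma reduce_self (g : σ → ℕ) : reduce a z g z = zDegree a z g := if_pos rfl

lemma reduce_of_ne {g : σ → ℕ} {i : σ} (hi : i ≠ z) : reduce a z g i = g i % a := if_neg hi

lemma weight_mono : Monotone (weight a z : (σ → ℕ) → ℕ) := fun g h hgh => by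
  unfold weight
  gcongr with i
  · exact hgh z
  · exact Nat.div_le_div_right (Nat.sub_le_sub_right (Nat.add_le_add_right (hgh i) _) _)

lemma weight_eq_zDegree_add (ha : 0 < a) (g : σ → ℕ) :
    weight a z g = zDegree a z g + a * #{i : {i // i ≠ z} | g i % a ≠ 0} := by
  simp only [weight, zDegree, Nat.ceilDiv_eq_div_add_ite ha, sum_add_distrib, card_filter,
    ite_not, mul_add, add_assoc]

lemma lt_weight_iff (ha : 0 < a) (g : σ → ℕ) :
    a * Fintype.card {i // i ≠ z} < weight a z g ↔
      a * #{i : {i // i ≠ z} | g i % a = 0} < zDegree a z g := by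
  rw [weight_eq_zDegree_add ha, ← card_univ,
    ← card_filter_add_card_filter_not (s := univ) (fun i : {i // i ≠ z} => g i % a = 0), mul_add]
  simp only [ne_eq]
  omega

lemma zDegree_reduce_add (ha : 0 < a) (g m : σ → ℕ) :
    zDegree a z (reduce a z g + m) = zDegree a z (g + m) := by
  have hdiv (i : {i // i ≠ z}) : (g + m) i / a = g i / a + (reduce a z g + m) i / a := by
    simp only [Pi.add_apply, reduce_of_ne i.2]
    conv_lhs => rw [← Nat.div_add_mod (g i) a, add_assoc, Nat.mul_add_div ha]
  rw [zDegree, zDegree, Pi.add_apply, reduce_self, sum_congr rfl fun i _ => hdiv i,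
    sum_add_distrib, zDegree, Pi.add_apply]
  ring

lemma mod_reduce_add {g : σ → ℕ} {i : σ} (hi : i ≠ z) (m : σ → ℕ) :
    (reduce a z g + m) i % a = (g + m) i % a := by
  simp only [Pi.add_apply, reduce_of_ne hi, Nat.mod_add_mod]

lemma reduce_reduce_add (ha : 0 < a) (g m : σ → ℕ) :
    reduce a z (reduce a z g + m) = reduce a z (g + m) := by
  ext i
  by_cases hi : i = z
  · simp only [reduce, if_pos hi, zDegree_reduce_add ha]
  · simp only [reduce_of_ne hi, mod_reduce_add hi]

lemma weight_reduce_add (ha : 0 < a) (g m : σ → ℕ) :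
    weight a z (reduce a z g + m) = weight a z (g + m) := by
  simp only [weight_eq_zDegree_add ha, zDegree_reduce_add ha]
  congr 3
  exact filter_congr fun i _ => by rw [mod_reduce_add i.2]

lemma reduce_single_pow (ha : 0 < a) {i : σ} (hi : i ≠ z) :
    reduce a z (Pi.single i a) = Pi.single z a := by
  ext j
  by_cases hj : j = z
  · subst hj
    rw [reduce_self, zDegree, Pi.single_eq_of_ne' hi, Pi.single_eq_same,
      Fintype.sum_eq_single ⟨i, hi⟩ fun k hk => by
        rw [Pi.single_eq_of_ne (Subtype.coe_ne_coe.mpr hk), Nat.zero_div],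
      Pi.single_eq_same, Nat.div_self ha, mul_one, zero_add]
  · rw [reduce_of_ne hj, Pi.single_eq_of_ne hj, Pi.single_apply]
    split_ifs <;> simp

lemma lt_weight_one (ha : 0 < a) : a * Fintype.card {i // i ≠ z} < weight a z 1 := by
  have h1 : 1 ⌈/⌉ a = 1 := by
    rw [Nat.ceilDiv_eq_add_pred_div, Nat.add_sub_cancel_left, Nat.div_self ha]
  simp [weight, h1]

end Exponents

section NormalForm

variable [DecidableEq σ] (K : Type*) [CommSemiring K] (a : ℕ) (z : σ)

noncomputable def normalForm (g : σ → ℕ) : (σ → ℕ) →₀ K :=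
  if a * Fintype.card {i // i ≠ z} < weight a z g then 0 else Finsupp.single (reduce a z g) 1

noncomputable def reduction : MvPolynomial σ K →ₗ[K] (σ → ℕ) →₀ K :=
  (basisMonomials σ K).constr K fun d => normalForm K a z d

variable {K a z}

lemma normalForm_reduce_add (ha : 0 < a) (g m : σ → ℕ) :
    normalForm K a z (reduce a z g + m) = normalForm K a z (g + m) := by
  simp only [normalForm, weight_reduce_add ha, reduce_reduce_add ha]

lemma normalForm_add_of_lt_weight {g : σ → ℕ} (hg : a * Fintype.card {i // i ≠ z} < weight a z g)
    (m : σ → ℕ) : normalForm K a z (g + m) = 0 :=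
  if_pos (hg.trans_le (weight_mono le_self_add))

lemma linearCombination_normalForm_add (ha : 0 < a) (g m : σ → ℕ) :
    Finsupp.linearCombination K (fun f => normalForm K a z (f + m)) (normalForm K a z g) =
      normalForm K a z (g + m) := by
  by_cases hg : a * Fintype.card {i // i ≠ z} < weight a z g
  · rw [show normalForm K a z g = 0 from if_pos hg, map_zero, normalForm_add_of_lt_weight hg]
  · rw [show normalForm K a z g = _ from if_neg hg, Finsupp.linearCombination_single, one_smul,
      normalForm_reduce_add ha]

lemma reduction_monomial (d : σ →₀ ℕ) : reduction K a z (monomial d 1) = normalForm K a z d := by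
  rw [show monomial d 1 = basisMonomials σ K d by rw [coe_basisMonomials], reduction,
    Module.Basis.constr_basis]

lemma reduction_prod_X_pow (g : σ → ℕ) :
    reduction K a z (∏ i, X i ^ g i) = normalForm K a z g := by
  rw [prod_X_pow, reduction_monomial]
  congr
  ext i
  simp [Finsupp.indicator_apply]

lemma reduction_monomial_mul (ha : 0 < a) (d : σ →₀ ℕ) (p : MvPolynomial σ K) :
    reduction K a z (monomial d 1 * p) =
      Finsupp.linearCombination K (fun f => normalForm K a z (f + d)) (reduction K a z p) := by
  have key : (reduction K a z).comp (LinearMap.mulLeft K (monomial d 1)) =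
      (Finsupp.linearCombination K fun f => normalForm K a z (f + d)).comp (reduction K a z) := by
    refine (basisMonomials σ K).ext fun f => ?_
    simp only [LinearMap.comp_apply, LinearMap.mulLeft_apply, coe_basisMonomials, monomial_mul,
      one_mul, reduction_monomial, linearCombination_normalForm_add ha, Finsupp.coe_add, add_comm]
  exact LinearMap.congr_fun key p

lemma reduction_mul_eq_zero (ha : 0 < a) {x : MvPolynomial σ K} (hx : reduction K a z x = 0)
    (r : MvPolynomial σ K) : reduction K a z (r * x) = 0 := by
  have key : (reduction K a z).comp (LinearMap.mulRight K x) = 0 := by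
    refine (basisMonomials σ K).ext fun f => ?_
    rw [LinearMap.comp_apply, coe_basisMonomials, LinearMap.mulRight_apply,
      reduction_monomial_mul ha, hx, map_zero, LinearMap.zero_apply]
  exact LinearMap.congr_fun key r

end NormalForm

section Relations

variable (K : Type*) [CommRing K] (a : ℕ) (z : σ)

def relations : Set (MvPolynomial σ K) :=
  {p | ∃ i : σ, i ≠ z ∧ p = X z ^ a - X i ^ a} ∪ {∏ i : σ, X i}

variable {K a z}

lemma mk_X_pow_eq {i : σ} (hi : i ≠ z) :
    Ideal.Quotient.mk (Ideal.span (relations K a z)) (X i) ^ a =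
      Ideal.Quotient.mk (Ideal.span (relations K a z)) (X z) ^ a := by
  have hrel : X z ^ a - X i ^ a ∈ Ideal.span (relations K a z) :=
    Ideal.subset_span (Or.inl ⟨i, hi, rfl⟩)
  simpa only [map_pow] using (Ideal.Quotient.eq.mpr hrel).symm

lemma prod_mk_X : ∏ i, Ideal.Quotient.mk (Ideal.span (relations K a z)) (X i) = 0 := by
  rw [← map_prod, Ideal.Quotient.eq_zero_iff_mem]
  exact Ideal.subset_span (Set.mem_union_right _ rfl)

variable [DecidableEq σ]

lemma reduction_X_pow (i : σ) : reduction K a z (X i ^ a) = normalForm K a z (Pi.single i a) := by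
  rw [X_pow_eq_monomial, reduction_monomial, Finsupp.single_eq_pi_single]

lemma reduction_eq_zero_of_mem_span (ha : 0 < a) {p : MvPolynomial σ K}
    (hp : p ∈ Ideal.span (relations K a z)) : reduction K a z p = 0 := by
  induction hp using Submodule.span_induction with
  | mem x hx =>
    obtain ⟨i, hi, rfl⟩ | rfl := hx
    · have h := normalForm_reduce_add (K := K) (z := z) ha (Pi.single i a) 0
      rw [reduce_single_pow ha hi, add_zero, add_zero] at h
      rw [map_sub, reduction_X_pow, reduction_X_pow, h, sub_self]
    · rw [show ∏ i, (X i : MvPolynomial σ K) = ∏ i, X i ^ (1 : σ → ℕ) i by simp,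
        reduction_prod_X_pow]
      exact if_pos (lt_weight_one ha)
  | zero => exact map_zero _
  | add x y _ _ hx hy => rw [map_add, hx, hy, add_zero]
  | smul r x _ hx => exact reduction_mul_eq_zero ha hx r

end Relations

section RingIdentities

variable [DecidableEq σ] {R : Type*} [CommRing R] {a : ℕ} {z : σ} {y : σ → R}

lemma prod_pow_eq_pow_zDegree_mul (hy : ∀ i ≠ z, y i ^ a = y z ^ a) (g : σ → ℕ) :
    ∏ i, y i ^ g i = y z ^ zDegree a z g * ∏ i : {i // i ≠ z}, y i ^ (g i % a) := by
  have hsplit (i : {i // i ≠ z}) : y i ^ g i = (y z ^ a) ^ (g i / a) * y i ^ (g i % a) := by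
    rw [← hy i i.2, ← pow_mul, ← pow_add, Nat.div_add_mod]
  rw [Fintype.prod_eq_mul_prod_subtype_ne _ z, prod_congr rfl fun i _ => hsplit i,
    prod_mul_distrib, prod_pow_eq_pow_sum, ← pow_mul, ← mul_assoc, ← pow_add, zDegree]

lemma prod_pow_eq_of_reduce_eq (hy : ∀ i ≠ z, y i ^ a = y z ^ a) {g h : σ → ℕ}
    (hgh : reduce a z g = reduce a z h) : ∏ i, y i ^ g i = ∏ i, y i ^ h i := by
  rw [prod_pow_eq_pow_zDegree_mul hy, prod_pow_eq_pow_zDegree_mul hy, ← reduce_self,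
    ← reduce_self, hgh]
  congr 1
  exact prod_congr rfl fun i _ => by rw [← reduce_of_ne i.2, ← reduce_of_ne i.2, hgh]

lemma prod_pow_eq_zero_of_lt_weight (ha : 0 < a) (hy : ∀ i ≠ z, y i ^ a = y z ^ a)
    (hprod : ∏ i, y i = 0) {g : σ → ℕ} (hg : a * Fintype.card {i // i ≠ z} < weight a z g) :
    ∏ i, y i ^ g i = 0 := by
  set k := #{i : {i // i ≠ z} | g i % a = 0}
  have hk : a * k < zDegree a z g := (lt_weight_iff ha g).mp hg
  -- Trade `y z ^ (a * k)` for the factors `y i ^ a` with `a ∣ g i`: then every variable occurs.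
  let h : σ → ℕ := fun i =>
    if i = z then zDegree a z g - a * k else if g i % a = 0 then a else g i % a
  have hpos (i : σ) : 0 < h i := by
    simp only [h]
    split_ifs <;> omega
  have hreduce : reduce a z h = reduce a z g := by
    ext i
    by_cases hi : i = z
    · have hdiv (j : {j // j ≠ z}) : h j / a = if g j % a = 0 then 1 else 0 := by
        simp only [h, if_neg j.2]
        split_ifs
        · exact Nat.div_self ha
        · exact Nat.div_eq_of_lt (Nat.mod_lt _ ha)
      rw [hi, reduce_self, reduce_self, zDegree, sum_congr rfl fun j _ => hdiv j, ← card_filter]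
      simp only [h, if_pos]
      exact Nat.sub_add_cancel hk.le
    · rw [reduce_of_ne hi, reduce_of_ne hi]
      simp only [h, if_neg hi]
      split_ifs with h0
      · rw [Nat.mod_self, h0]
      · exact Nat.mod_mod _ _
  rw [prod_pow_eq_of_reduce_eq hy hreduce.symm]
  exact zero_dvd_iff.mp (hprod ▸ prod_dvd_prod_of_dvd _ _ fun i _ => dvd_pow_self _ (hpos i).ne')

end RingIdentities

section StandardMonomials

variable [DecidableEq σ] (a : ℕ) (z : σ)

/-- `⟨r, e⟩` stands for the standard monomial `t_z ^ e * ∏_{i ≠ z} t_i ^ r i`. -/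
abbrev StdIndex : Type _ := Σ r : {i // i ≠ z} → Fin a, Fin (a * #{i | (r i : ℕ) = 0} + 1)

variable {a z}

def StdIndex.exponent (x : StdIndex a z) : σ → ℕ := fun i => if h : i = z then x.2 else x.1 ⟨i, h⟩

lemma StdIndex.exponent_injective :
    Function.Injective (StdIndex.exponent : StdIndex a z → σ → ℕ) := by
  rintro ⟨r, k⟩ ⟨r', k'⟩ h
  obtain rfl : r = r' := funext fun i => Fin.ext (by simpa [exponent, i.2] using congrFun h i)
  obtain rfl : k = k' := Fin.ext (by simpa [exponent] using congrFun h z)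
  rfl

lemma StdIndex.exponent_self (x : StdIndex a z) : x.exponent z = x.2 := dif_pos rfl

lemma StdIndex.exponent_of_ne (x : StdIndex a z) (i : {i // i ≠ z}) : x.exponent i = x.1 i :=
  dif_neg i.2

lemma StdIndex.exponent_mod (x : StdIndex a z) (i : {i // i ≠ z}) :
    x.exponent i % a = x.1 i := by
  rw [x.exponent_of_ne, Nat.mod_eq_of_lt (x.1 i).isLt]

lemma StdIndex.zDegree_exponent (x : StdIndex a z) : zDegree a z x.exponent = x.2 := by
  simp [zDegree, exponent_self, exponent_of_ne, Nat.div_eq_of_lt]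

lemma StdIndex.reduce_exponent (x : StdIndex a z) : reduce a z x.exponent = x.exponent := by
  ext i
  by_cases hi : i = z
  · rw [hi, reduce_self, zDegree_exponent, exponent_self]
  · rw [reduce_of_ne hi, x.exponent_mod ⟨i, hi⟩, x.exponent_of_ne ⟨i, hi⟩]

lemma StdIndex.not_lt_weight_exponent (ha : 0 < a) (x : StdIndex a z) :
    ¬ a * Fintype.card {i // i ≠ z} < weight a z x.exponent := by
  rw [lt_weight_iff ha, zDegree_exponent, not_lt]
  simpa only [exponent_mod, Nat.lt_succ_iff] using x.2.isLt

lemma StdIndex.normalForm_exponent (K : Type*) [CommSemiring K] (ha : 0 < a) (x : StdIndex a z) :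
    normalForm K a z x.exponent = Finsupp.single x.exponent 1 := by
  rw [normalForm, if_neg (x.not_lt_weight_exponent ha), x.reduce_exponent]

lemma StdIndex.exists_exponent_eq_reduce (ha : 0 < a) {g : σ → ℕ}
    (hg : ¬ a * Fintype.card {i // i ≠ z} < weight a z g) :
    ∃ x : StdIndex a z, x.exponent = reduce a z g := by
  rw [lt_weight_iff ha, not_lt] at hg
  refine ⟨⟨fun i => ⟨g i % a, Nat.mod_lt _ ha⟩, ⟨zDegree a z g, Nat.lt_succ_of_le hg⟩⟩, ?_⟩
  ext i
  by_cases hi : i = z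
  · rw [hi, reduce_self, exponent_self]
  · rw [reduce_of_ne hi, exponent_of_ne _ ⟨i, hi⟩]

lemma StdIndex.card (ha : 0 < a) :
    Fintype.card (StdIndex a z) = Fintype.card σ * a ^ (Fintype.card σ - 1) := by
  have hcard : Fintype.card {i // i ≠ z} + 1 = Fintype.card σ := by
    rw [Fintype.card_subtype_compl, Fintype.card_subtype_eq]
    exact Nat.sub_add_cancel (Fintype.card_pos_iff.mpr ⟨z⟩)
  simp only [Fintype.card_sigma, Fintype.card_fin,
    Fintype.sum_pi_fin_mul_card_zero_add_one _ ha, hcard, ← Nat.eq_sub_of_add_eq hcard]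

end StandardMonomials

section Basis

variable [DecidableEq σ] (K : Type*) [Field K] (a : ℕ) (z : σ)

noncomputable def stdMonomial (x : StdIndex a z) :
    MvPolynomial σ K ⧸ Ideal.span (relations K a z) :=
  Ideal.Quotient.mk _ (∏ i, X i ^ x.exponent i)

variable {K a z}

lemma mk_prod_X_pow_mem_span_stdMonomial (ha : 0 < a) (g : σ → ℕ) :
    Ideal.Quotient.mk (Ideal.span (relations K a z)) (∏ i, X i ^ g i) ∈
      Submodule.span K (Set.range (stdMonomial K a z)) := by
  simp only [map_prod, map_pow]
  by_cases hg : a * Fintype.card {i // i ≠ z} < weight a z g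
  · rw [prod_pow_eq_zero_of_lt_weight ha (fun i => mk_X_pow_eq) prod_mk_X hg]
    exact zero_mem _
  · obtain ⟨x, hx⟩ := StdIndex.exists_exponent_eq_reduce ha hg
    rw [prod_pow_eq_of_reduce_eq (fun i => mk_X_pow_eq) (h := x.exponent)
      (by rw [x.reduce_exponent, hx])]
    exact Submodule.subset_span ⟨x, by simp [stdMonomial]⟩

lemma span_stdMonomial_eq_top (ha : 0 < a) :
    Submodule.span K (Set.range (stdMonomial K a z)) = ⊤ := by
  let mk := (Ideal.Quotient.mkₐ K (Ideal.span (relations K a z))).toLinearMap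
  have hmonomials : Submodule.span K (mk '' Set.range fun d : σ →₀ ℕ => monomial d 1) = ⊤ := by
    rw [Submodule.span_image, ← coe_basisMonomials, (basisMonomials σ K).span_eq,
      Submodule.map_top, LinearMap.range_eq_top]
    exact Ideal.Quotient.mkₐ_surjective K _
  refine eq_top_iff.mpr (hmonomials.symm.trans_le (Submodule.span_le.mpr ?_))
  rintro _ ⟨_, ⟨d, rfl⟩, rfl⟩
  have hd : monomial d (1 : K) = ∏ i, X i ^ d i := by
    rw [monomial_eq, C_1, one_mul, Finsupp.prod_fintype _ _ fun _ => pow_zero _]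
  rw [SetLike.mem_coe, show mk (monomial d 1) = _ from congrArg mk hd]
  exact mk_prod_X_pow_mem_span_stdMonomial ha d

lemma linearIndependent_stdMonomial (ha : 0 < a) : LinearIndependent K (stdMonomial K a z) := by
  have hsingle : LinearIndependent K fun x : StdIndex a z => Finsupp.single x.exponent (1 : K) :=
    Finsupp.basisSingleOne.linearIndependent.comp _ StdIndex.exponent_injective
  rw [Fintype.linearIndependent_iff] at hsingle ⊢
  intro c hc
  have hmem : ∑ x, c x • ∏ i, X i ^ x.exponent i ∈ Ideal.span (relations K a z) := by
    rw [← Ideal.Quotient.eq_zero_iff_mem, ← Ideal.Quotient.mkₐ_eq_mk K, map_sum]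
    simpa [stdMonomial] using hc
  refine hsingle c ?_
  simpa [reduction_prod_X_pow, StdIndex.normalForm_exponent _ ha] using
    reduction_eq_zero_of_mem_span ha hmem

variable (K a z) in
noncomputable def stdBasis (ha : 0 < a) :
    Module.Basis (StdIndex a z) K (MvPolynomial σ K ⧸ Ideal.span (relations K a z)) :=
  .mk (linearIndependent_stdMonomial ha) (span_stdMonomial_eq_top ha).ge

theorem finrank_quotient_span_relations (ha : 0 < a) :
    Module.finrank K (MvPolynomial σ K ⧸ Ideal.span (relations K a z)) =
      Fintype.card σ * a ^ (Fintype.card σ - 1) := by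
  rw [Module.finrank_eq_card_basis (stdBasis K a z ha), StdIndex.card ha]

end Basis

end AdmissibleDeformationRing

open AdmissibleDeformationRing in
/-- Let `I ⊆ ℂ[t₁, …, tₙ]` be the ideal generated by `t₁^a - t_i^a` for `2 ≤ i ≤ n`
together with `t₁ t₂ ⋯ tₙ`. Then `ℂ[t₁, …, tₙ]/I` is a finite-dimensional ℂ-vector
space of dimension `n * a^(n-1)`. -/
theorem dimension_of_admissible_deformation_ring (n a : ℕ) (hn : 1 ≤ n) (ha : 1 ≤ a)
    (I : Ideal (MvPolynomial (Fin n) ℂ))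
    (hI : I = Ideal.span
      ({p | ∃ i : Fin n, i ≠ ⟨0, hn⟩ ∧ p = X (⟨0, hn⟩ : Fin n) ^ a - X i ^ a} ∪
        {∏ i : Fin n, X i})) :
    FiniteDimensional ℂ (MvPolynomial (Fin n) ℂ ⧸ I) ∧
      Module.finrank ℂ (MvPolynomial (Fin n) ℂ ⧸ I) = n * a ^ (n - 1) := by
  replace hI : I = Ideal.span (relations ℂ a (⟨0, hn⟩ : Fin n)) := hI
  subst hI
  refine ⟨.of_basis (stdBasis ℂ a _ ha), ?_⟩
  simpa only [Fintype.card_fin] using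
    finrank_quotient_span_relations (K := ℂ) (z := (⟨0, hn⟩ : Fin n)) ha
end
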